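/- arXiv:1210.3353 — 15 statements merged into one kernel-verified Lean document; each statement's English description precedes it below -/
import Mathlib

section
/- Let F be a field of characteristic ≠ 2 and R an associative unital F-algebra with an involution * of the first kind, and assume S ⊊ R. Then for every x, y ∈ S and every r ∈ R, (xy − yx)r ∈ S³; in other words, the right ideal (xy − yx)R is contained in S³. -/
private lemma memG {R : Type*} [Ring R] [StarRing R] {a b c : R}
    (ha : star a = a) (hb : star b = b) (hc : star c = c) :
    a * b * c ∈ AddSubgroup.closure {z : R | ∃ a ∈ {r : R | star r = r},
          ∃ b ∈ {r : R | star r = r}, ∃ c ∈ {r : R | star r = r}, z = a * b * c} :=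
  AddSubgroup.subset_closure ⟨a, ha, b, hb, c, hc, rfl⟩

/-- For every `x, y ∈ S` and every `r ∈ R`, `(xy − yx)r ∈ S³`. -/
theorem stmt_1 (F R : Type*) [Field F] [Ring R] [Algebra F R] [StarRing R]
    (hchar : (2 : F) ≠ 0)
    (hfirst : Set.center R ⊆ {r : R | star r = r})
    (hproper : {r : R | star r = r} ≠ Set.univ) :
    ∀ x ∈ {r : R | star r = r}, ∀ y ∈ {r : R | star r = r}, ∀ r : R,
      (x * y - y * x) * r ∈
        AddSubgroup.closure {z : R | ∃ a ∈ {r : R | star r = r},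
          ∃ b ∈ {r : R | star r = r}, ∃ c ∈ {r : R | star r = r}, z = a * b * c} := by
  intro x hx y hy r
  simp only [Set.mem_setOf_eq] at hx hy
  set t : R := algebraMap F R (2⁻¹ : F) with ht
  have htc : ∀ z : R, z * t = t * z := fun z => (Algebra.commutes _ _).symm
  have hts : star t = t := hfirst (Semigroup.mem_center_iff.mpr fun z => htc z)
  have h2 : (2 : R) * t = 1 := by
    rw [ht, ← map_ofNat (algebraMap F R) 2, ← map_mul,
      mul_inv_cancel₀ hchar, map_one]
  set s : R := (r + star r) * t with hsdef
  set k : R := (r - star r) * t with hkdef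
  have hss : star s = s := by
    rw [hsdef, star_mul, hts, star_add, star_star, ← htc, add_comm]
  have hks : star k = -k := by
    rw [hkdef, star_mul, hts, star_sub, star_star, ← htc, ← neg_sub, neg_mul]
  have hrk : r = s + k := by
    have : s + k = (2 : R) * r * t := by rw [hsdef, hkdef]; noncomm_ring
    rw [this, mul_assoc, htc, ← mul_assoc, h2, one_mul]
  have h1s : star (1 : R) = 1 := star_one R
  have hb1 : star (y * k - k * y) = y * k - k * y := by
    simp only [star_sub, star_mul, hks, hy]; noncomm_ring
  have hb2 : star (x * k - k * x) = x * k - k * x := by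
    simp only [star_sub, star_mul, hks, hx]; noncomm_ring
  have hd : star (x * k * y - y * k * x) = x * k * y - y * k * x := by
    simp only [star_sub, star_mul, hks, hx, hy]; noncomm_ring
  have key : (x * y - y * x) * r =
      x * y * s - y * x * s +
        (x * (y * k - k * y) * 1 - y * (x * k - k * x) * 1 +
          (x * k * y - y * k * x) * 1 * 1) := by
    rw [hrk]; noncomm_ring
  rw [key]
  exact add_mem (sub_mem (memG hx hy hss) (memG hy hx hss))
    (add_mem (sub_mem (memG hx hb1 h1s) (memG hy hb2 h1s)) (memG hd h1s h1s))
end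

section
/- Let F be a field of characteristic ≠ 2 and R an associative unital F-algebra with an involution * of the first kind, and assume S ⊊ R. Then for every x, y ∈ S and every u, r ∈ R, u(xy − yx)r ∈ S³; in other words, the two-sided ideal R(xy − yx)R is contained in S³. -/
/-- For every `x, y ∈ S` and every `u, r ∈ R`, `u(xy − yx)r ∈ S³`. -/
theorem stmt_2 (F R : Type*) [Field F] [Ring R] [Algebra F R] [StarRing R]
    (hchar : (2 : F) ≠ 0)
    (hfirst : Set.center R ⊆ {r : R | star r = r})
    (hproper : {r : R | star r = r} ≠ Set.univ) :
    ∀ x ∈ {r : R | star r = r}, ∀ y ∈ {r : R | star r = r}, ∀ u r : R,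
      u * (x * y - y * x) * r ∈
        AddSubgroup.closure {z : R | ∃ a ∈ {r : R | star r = r},
          ∃ b ∈ {r : R | star r = r}, ∃ c ∈ {r : R | star r = r}, z = a * b * c} := by
  intro x hx y hy u r
  set G : Set R := {z : R | ∃ a ∈ {r : R | star r = r},
      ∃ b ∈ {r : R | star r = r}, ∃ c ∈ {r : R | star r = r}, z = a * b * c} with hG
  set T : AddSubgroup R := AddSubgroup.closure G with hT
  replace hx : star x = x := hx
  replace hy : star y = y := hy
  -- basic generators
  have hmem : ∀ a b c : R, star a = a → star b = b → star c = c → a * b * c ∈ T :=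
    fun a b c ha hb hc => AddSubgroup.subset_closure ⟨a, ha, b, hb, c, hc, rfl⟩
  have h1 : star (1 : R) = 1 := star_one R
  have hS2 : ∀ a b : R, star a = a → star b = b → a * b ∈ T := by
    intro a b ha hb
    have := hmem 1 a b h1 ha hb
    simpa using this
  have hS1 : ∀ a : R, star a = a → a ∈ T := by
    intro a ha
    have := hmem 1 1 a h1 h1 ha
    simpa using this
  -- the central half element
  set e : R := algebraMap F R 2⁻¹ with he
  have hecomm : ∀ a : R, e * a = a * e := fun a => Algebra.commutes _ _
  have hestar : star e = e :=
    hfirst (Semigroup.mem_center_iff.mpr fun a => (hecomm a).symm)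
  have hee : ∀ a : R, e * a + e * a = a := by
    intro a
    have h2 : (2 : F)⁻¹ + 2⁻¹ = 1 := by rw [← two_mul]; exact mul_inv_cancel₀ hchar
    calc e * a + e * a = (e + e) * a := (add_mul e e a).symm
      _ = a := by rw [he, ← map_add, h2, map_one, one_mul]
  have hestar_mul : ∀ a : R, star a = a → star (e * a) = e * a := by
    intro a ha
    rw [star_mul, ha, hestar]
    exact (hecomm a).symm
  have hepull : ∀ z w : R, z * (e * w) = e * (z * w) := by
    intro z w
    rw [← mul_assoc, ← hecomm, mul_assoc]
  -- e * T ⊆ T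
  have heT : ∀ z ∈ T, e * z ∈ T := by
    intro z hz
    have hle : T ≤ AddSubgroup.comap (AddMonoidHom.mulLeft e) T := by
      rw [hT]
      refine (AddSubgroup.closure_le _).mpr ?_
      rintro w ⟨a, ha, b, hb, c, hc, rfl⟩
      simp only [SetLike.mem_coe, AddSubgroup.mem_comap, AddMonoidHom.coe_mulLeft]
      have hideq : e * (a * b * c) = (e * a) * b * c := by noncomm_ring
      rw [hideq]
      exact hmem (e * a) b c (hestar_mul a ha) hb hc
    exact hle hz
  -- commutator of skew and symmetric is symmetric
  have hsk : ∀ k a : R, star k = -k → star a = a → star (k * a - a * k) = k * a - a * k := by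
    intro k a hk ha
    rw [star_sub, star_mul, star_mul, hk, ha]
    noncomm_ring
  -- commutator of two symmetric is skew
  have hcomm_skew : ∀ a b : R, star a = a → star b = b →
      star (a * b - b * a) = -(a * b - b * a) := by
    intro a b ha hb
    rw [star_sub, star_mul, star_mul, ha, hb]
    noncomm_ring
  -- k[a,b] - [a,b]k ∈ T
  have hkc_sub : ∀ a b k : R, star a = a → star b = b → star k = -k →
      k * (a * b - b * a) - (a * b - b * a) * k ∈ T := by
    intro a b k ha hb hk
    have hid : k * (a * b - b * a) - (a * b - b * a) * k =
        ((k * a - a * k) * b + a * (k * b - b * k)) -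
        ((k * b - b * k) * a + b * (k * a - a * k)) := by noncomm_ring
    rw [hid]
    exact T.sub_mem
      (T.add_mem (hS2 _ _ (hsk k a hk ha) hb) (hS2 _ _ ha (hsk k b hk hb)))
      (T.add_mem (hS2 _ _ (hsk k b hk hb) ha) (hS2 _ _ hb (hsk k a hk ha)))
  -- k[a,b] + [a,b]k ∈ T (it is symmetric)
  have hkc_add : ∀ a b k : R, star a = a → star b = b → star k = -k →
      k * (a * b - b * a) + (a * b - b * a) * k ∈ T := by
    intro a b k ha hb hk
    refine hS1 _ ?_
    rw [star_add, star_mul, star_mul, hk, hcomm_skew a b ha hb]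
    noncomm_ring
  -- k[a,b] ∈ T
  have hKc : ∀ a b k : R, star a = a → star b = b → star k = -k →
      k * (a * b - b * a) ∈ T := by
    intro a b k ha hb hk
    have hsum : (k * (a*b-b*a) - (a*b-b*a) * k) + (k * (a*b-b*a) + (a*b-b*a) * k) ∈ T :=
      T.add_mem (hkc_sub a b k ha hb hk) (hkc_add a b k ha hb hk)
    have hmm := heT _ hsum
    have heq : e * ((k * (a*b-b*a) - (a*b-b*a) * k) + (k * (a*b-b*a) + (a*b-b*a) * k)) =
        k * (a*b-b*a) := by
      have h' : (k * (a*b-b*a) - (a*b-b*a) * k) + (k * (a*b-b*a) + (a*b-b*a) * k) =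
          k * (a*b-b*a) + k * (a*b-b*a) := by abel
      rw [h', mul_add, hee]
    rwa [heq] at hmm
  -- [a,b]k ∈ T
  have hcK : ∀ a b k : R, star a = a → star b = b → star k = -k →
      (a * b - b * a) * k ∈ T := by
    intro a b k ha hb hk
    have hneg : (a*b-b*a) * k - k * (a*b-b*a) ∈ T := by
      have := T.neg_mem (hkc_sub a b k ha hb hk)
      rwa [neg_sub] at this
    have hsum : ((a*b-b*a) * k - k * (a*b-b*a)) + (k * (a*b-b*a) + (a*b-b*a) * k) ∈ T :=
      T.add_mem hneg (hkc_add a b k ha hb hk)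
    have hmm := heT _ hsum
    have heq : e * (((a*b-b*a) * k - k * (a*b-b*a)) + (k * (a*b-b*a) + (a*b-b*a) * k)) =
        (a*b-b*a) * k := by
      have h' : ((a*b-b*a) * k - k * (a*b-b*a)) + (k * (a*b-b*a) + (a*b-b*a) * k) =
          (a*b-b*a) * k + (a*b-b*a) * k := by abel
      rw [h', mul_add, hee]
    rwa [heq] at hmm
  -- p [a,b] q ∈ T for symmetric p, q
  have hScS : ∀ a b p q : R, star a = a → star b = b → star p = p → star q = q →
      p * (a * b - b * a) * q ∈ T := by
    intro a b p q ha hb hp hq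
    have hck : star (a*b-b*a) = -(a*b-b*a) := hcomm_skew a b ha hb
    have hm : star (p*q + q*p) = p*q + q*p := by
      rw [star_add, star_mul, star_mul, hp, hq]; abel
    have hκ : star (p*q - q*p) = -(p*q - q*p) := hcomm_skew p q hp hq
    have hcm : (a*b-b*a) * (p*q + q*p) ∈ T := by
      have hid : (a*b-b*a) * (p*q+q*p) = a*b*(p*q+q*p) - b*a*(p*q+q*p) := by noncomm_ring
      rw [hid]
      exact T.sub_mem (hmem a b _ ha hb hm) (hmem b a _ hb ha hm)
    have hcκ : (a*b-b*a) * (p*q - q*p) ∈ T := hcK a b _ ha hb hκ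
    have hcpq : (a*b-b*a) * (p * q) ∈ T := by
      have hin := heT _ (T.add_mem hcm hcκ)
      have heq : e * ((a*b-b*a) * (p*q+q*p) + (a*b-b*a) * (p*q-q*p)) =
          (a*b-b*a) * (p*q) := by
        have h' : (a*b-b*a) * (p*q+q*p) + (a*b-b*a) * (p*q-q*p) =
            (a*b-b*a) * (p*q) + (a*b-b*a) * (p*q) := by noncomm_ring
        rw [h', mul_add, hee]
      rwa [heq] at hin
    have hid : p * (a*b-b*a) * q =
        (a*b-b*a) * (p * q) - ((a*b-b*a) * p - p * (a*b-b*a)) * q := by noncomm_ring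
    rw [hid]
    exact T.sub_mem hcpq (hS2 _ _ (hsk (a*b-b*a) p hck hp) hq)
  -- T * S ⊆ T
  have hTS : ∀ z ∈ T, ∀ d : R, star d = d → z * d ∈ T := by
    intro z hz d hd
    have hle : T ≤ AddSubgroup.comap (AddMonoidHom.mulRight d) T := by
      rw [hT]
      refine (AddSubgroup.closure_le _).mpr ?_
      rintro w ⟨a, ha, b, hb, c, hc, rfl⟩
      simp only [SetLike.mem_coe, AddSubgroup.mem_comap, AddMonoidHom.coe_mulRight]
      have hm : star (b*c + c*b) = b*c + c*b := by
        rw [star_add, star_mul, star_mul, hb, hc]; abel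
      have hkey : e * (a * (b*c+c*b) * d) + e * (a * (b*c-c*b) * d) = a*b*c*d := by
        rw [← mul_add]
        have h' : a * (b*c+c*b) * d + a * (b*c-c*b) * d = a*b*c*d + a*b*c*d := by noncomm_ring
        rw [h', mul_add, hee]
      rw [← hkey]
      exact T.add_mem (heT _ (hmem a _ d ha hm hd)) (heT _ (hScS b c a d hb hc ha hd))
    have := hle hz
    simpa [AddSubgroup.mem_comap] using this
  -- S * T ⊆ T
  have hST : ∀ a : R, star a = a → ∀ z ∈ T, a * z ∈ T := by
    intro a ha z hz
    have hle : T ≤ AddSubgroup.comap (AddMonoidHom.mulLeft a) T := by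
      rw [hT]
      refine (AddSubgroup.closure_le _).mpr ?_
      rintro w ⟨p, hp, q, hq, s, hs, rfl⟩
      simp only [SetLike.mem_coe, AddSubgroup.mem_comap, AddMonoidHom.coe_mulLeft]
      have hm : star (p*q + q*p) = p*q + q*p := by
        rw [star_add, star_mul, star_mul, hp, hq]; abel
      have hkey : e * (a * (p*q+q*p) * s) + e * (a * (p*q-q*p) * s) = a * (p*q*s) := by
        rw [← mul_add]
        have h' : a * (p*q+q*p) * s + a * (p*q-q*p) * s = a*(p*q*s) + a*(p*q*s) := by
          noncomm_ring
        rw [h', mul_add, hee]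
      rw [← hkey]
      exact T.add_mem (heT _ (hmem a _ s ha hm hs)) (heT _ (hScS p q a s hp hq ha hs))
    have := hle hz
    simpa [AddSubgroup.mem_comap] using this
  -- symmetric / skew parts of u and r
  have hp : star (u + star u) = u + star u := by rw [star_add, star_star, add_comm]
  have hk : star (u - star u) = -(u - star u) := by rw [star_sub, star_star]; abel
  have hq : star (r + star r) = r + star r := by rw [star_add, star_star, add_comm]
  have hl : star (r - star r) = -(r - star r) := by rw [star_sub, star_star]; abel
  -- the four cases
  have hpq : (u + star u) * (x*y - y*x) * (r + star r) ∈ T := hScS x y _ _ hx hy hp hq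
  have hpl : (u + star u) * (x*y - y*x) * (r - star r) ∈ T := by
    rw [mul_assoc]
    exact hST _ hp _ (hcK x y _ hx hy hl)
  have hkq : (u - star u) * (x*y - y*x) * (r + star r) ∈ T :=
    hTS _ (hKc x y _ hx hy hk) _ hq
  have hkcl : (u - star u) * (x*y - y*x) * (r - star r) ∈ T := by
    set k : R := u - star u
    set l : R := r - star r
    have hm' : star (k*l + l*k) = k*l + l*k := by
      rw [star_add, star_mul, star_mul, hk, hl]; noncomm_ring
    have hκ' : star (k*l - l*k) = -(k*l - l*k) := by
      rw [star_sub, star_mul, star_mul, hk, hl]; noncomm_ring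
    have hckl : (x*y - y*x) * (k * l) ∈ T := by
      have h1' : (x*y - y*x) * (k*l + l*k) ∈ T := by
        have hid : (x*y - y*x) * (k*l + l*k) = x*y*(k*l+l*k) - y*x*(k*l+l*k) := by
          noncomm_ring
        rw [hid]
        exact T.sub_mem (hmem x y _ hx hy hm') (hmem y x _ hy hx hm')
      have h2' : (x*y - y*x) * (k*l - l*k) ∈ T := hcK x y _ hx hy hκ'
      have hin := heT _ (T.add_mem h1' h2')
      have heq : e * ((x*y - y*x) * (k*l + l*k) + (x*y - y*x) * (k*l - l*k)) =
          (x*y - y*x) * (k*l) := by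
        have h' : (x*y - y*x) * (k*l + l*k) + (x*y - y*x) * (k*l - l*k) =
            (x*y - y*x) * (k*l) + (x*y - y*x) * (k*l) := by noncomm_ring
        rw [h', mul_add, hee]
      rwa [heq] at hin
    have hfix : (k * (x*y - y*x) - (x*y - y*x) * k) * l ∈ T := by
      have hcorr : k * (x*y - y*x) - (x*y - y*x) * k =
          ((k*x - x*k)*y - y*(k*x - x*k)) + (x*(k*y - y*k) - (k*y - y*k)*x) := by
        noncomm_ring
      rw [hcorr, add_mul]
      exact T.add_mem (hcK _ y l (hsk k x hk hx) hy hl) (hcK x _ l hx (hsk k y hk hy) hl)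
    have hid : k * (x*y - y*x) * l =
        (x*y - y*x) * (k * l) + (k * (x*y - y*x) - (x*y - y*x) * k) * l := by noncomm_ring
    rw [hid]
    exact T.add_mem hckl hfix
  -- reassemble
  have hu : e * ((u + star u) + (u - star u)) = u := by
    have h' : (u + star u) + (u - star u) = u + u := by abel
    rw [h', mul_add, hee]
  have hr2 : e * ((r + star r) + (r - star r)) = r := by
    have h' : (r + star r) + (r - star r) = r + r := by abel
    rw [h', mul_add, hee]
  have hEE : ∀ A w B : R, (e*A) * w * (e*B) = e * (e * (A * w * B)) := by
    intro A w B
    rw [mul_assoc e A w, mul_assoc e (A*w) (e*B), hepull (A*w) B]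
  have hstep : u * (x*y - y*x) * r =
      e * (e * (((u + star u) + (u - star u)) * (x*y - y*x) *
        ((r + star r) + (r - star r)))) := by
    conv_lhs => rw [← hu, ← hr2]
    exact hEE _ _ _
  rw [hstep]
  refine heT _ (heT _ ?_)
  have hexp : ((u + star u) + (u - star u)) * (x*y - y*x) * ((r + star r) + (r - star r)) =
      (u + star u) * (x*y - y*x) * (r + star r)
      + (u + star u) * (x*y - y*x) * (r - star r)
      + (u - star u) * (x*y - y*x) * (r + star r)
      + (u - star u) * (x*y - y*x) * (r - star r) := by noncomm_ring
  rw [hexp]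
  exact T.add_mem (T.add_mem (T.add_mem hpq hpl) hkq) hkcl
end

section
/- Let F be a field of characteristic ≠ 2 and R a simple associative unital F-algebra with an involution * of the first kind, and assume S ⊊ R. If S is not a commutative set (i.e., there exist x, y ∈ S with xy ≠ yx), then S³ = R. -/
/-- If `R` is simple and `S` is not a commutative set, then `S³ = R`. -/
theorem stmt_3 (F R : Type*) [Field F] [Ring R] [Algebra F R] [StarRing R]
    [IsSimpleRing R]
    (hchar : (2 : F) ≠ 0)
    (hfirst : Set.center R ⊆ {r : R | star r = r})
    (hproper : {r : R | star r = r} ≠ Set.univ)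
    (hnc : ∃ x ∈ {r : R | star r = r}, ∃ y ∈ {r : R | star r = r}, x * y ≠ y * x) :
    (AddSubgroup.closure {z : R | ∃ a ∈ {r : R | star r = r},
        ∃ b ∈ {r : R | star r = r}, ∃ c ∈ {r : R | star r = r},
        z = a * b * c} : Set R) = Set.univ := by
  classical
  obtain ⟨x, hx, y, hy, hxy⟩ := hnc
  have hx' : star x = x := hx
  have hy' : star y = y := hy
  set P : Set R := {z : R | ∃ a ∈ {r : R | star r = r},
        ∃ b ∈ {r : R | star r = r}, ∃ c ∈ {r : R | star r = r},
        z = a * b * c} with hPdef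
  set T := AddSubgroup.closure P with hTdef
  -- generic induction principle
  have ind : ∀ (p : R → Prop), (∀ z ∈ P, p z) → p 0 →
      (∀ a b, p a → p b → p (a + b)) → (∀ a, p a → p (-a)) → ∀ t ∈ T, p t := by
    intro p hmem h0 hadd hneg t ht
    exact AddSubgroup.closure_induction (p := fun g _ => p g)
      (fun z hz => hmem z hz) h0 (fun a b _ _ => hadd a b) (fun a _ => hneg a) ht
  have memP : ∀ a b c : R, star a = a → star b = b → star c = c → a * b * c ∈ T :=
    fun a b c ha hb hc => AddSubgroup.subset_closure ⟨a, ha, b, hb, c, hc, rfl⟩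
  have memS : ∀ s : R, star s = s → s ∈ T := fun s hs => by
    have := memP 1 1 s (star_one R) (star_one R) hs
    simpa using this
  have mem2 : ∀ s t : R, star s = s → star t = t → s * t ∈ T := fun s t hs ht => by
    have := memP s t 1 hs ht (star_one R)
    simpa using this
  -- the central half element
  set h : R := algebraMap F R 2⁻¹ with hhdef
  have hcomm : ∀ z : R, h * z = z * h := fun z => Algebra.commutes 2⁻¹ z
  have hstar : star h = h := hfirst (Semigroup.mem_center_iff.mpr fun g => (hcomm g).symm)
  have hhalf : ∀ z : R, h * z + h * z = z := by
    intro z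
    rw [← add_mul]
    have h2 : h + h = 1 := by
      rw [hhdef, ← map_add, ← two_mul, mul_inv_cancel₀ hchar, map_one]
    rw [h2, one_mul]
  have hmove : ∀ u v : R, u * (h * v) = h * (u * v) := by
    intro u v
    rw [← mul_assoc, ← hcomm, mul_assoc]
  have smulT : ∀ t ∈ T, h * t ∈ T := by
    intro t ht
    refine ind (fun t => h * t ∈ T) ?_ ?_ ?_ ?_ t ht
    · rintro z ⟨a, ha, b, hb, c, hc, rfl⟩
      have ha' : star a = a := ha
      have hsa : star (h * a) = h * a := by rw [star_mul, hstar, ha', ← hcomm]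
      have e : h * (a * b * c) = (h * a) * b * c := by
        rw [← mul_assoc, ← mul_assoc]
      rw [e]; exact memP _ _ _ hsa hb hc
    · show h * 0 ∈ T; rw [mul_zero]; exact zero_mem T
    · intro a b hpa hpb; show h * (a + b) ∈ T; rw [mul_add]; exact add_mem hpa hpb
    · intro a hpa; show h * (-a) ∈ T; rw [mul_neg]; exact neg_mem hpa
  -- S^4 ⊆ T
  have key4 : ∀ a b c d : R, star a = a → star b = b → star c = c → star d = d →
      a * b * c * d ∈ T := by
    intro a b c d ha hb hc hd
    set k₁ : R := a * b - b * a with hk1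
    set k₂ : R := c * d - d * c with hk2
    set σ₁ : R := h * (a * b + b * a) with hs1
    set σ₂ : R := h * (c * d + d * c) with hs2
    have hsk1 : star k₁ = -k₁ := by
      rw [hk1, star_sub, star_mul, star_mul, ha, hb, neg_sub]
    have hsk2 : star k₂ = -k₂ := by
      rw [hk2, star_sub, star_mul, star_mul, hc, hd, neg_sub]
    have hss1 : star σ₁ = σ₁ := by
      rw [hs1, star_mul, hstar, star_add, star_mul, star_mul, ha, hb, ← hcomm,
        add_comm (b * a)]
    have hss2 : star σ₂ = σ₂ := by
      rw [hs2, star_mul, hstar, star_add, star_mul, star_mul, hc, hd, ← hcomm,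
        add_comm (d * c)]
    have e₁ : a * b = σ₁ + h * k₁ := by
      rw [hs1, hk1, ← mul_add, show a * b + b * a + (a * b - b * a) = a * b + a * b by abel,
        mul_add, hhalf]
    have e₂ : c * d = σ₂ + h * k₂ := by
      rw [hs2, hk2, ← mul_add, show c * d + d * c + (c * d - d * c) = c * d + c * d by abel,
        mul_add, hhalf]
    have expand : a * b * c * d =
        σ₁ * σ₂ + (σ₁ * (h * k₂) + ((h * k₁) * σ₂ + (h * k₁) * (h * k₂))) := by
      calc a * b * c * d = (a * b) * (c * d) := by rw [mul_assoc]
        _ = (σ₁ + h * k₁) * (σ₂ + h * k₂) := by rw [← e₁, ← e₂]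
        _ = _ := by noncomm_ring
    rw [expand]
    have t1 : σ₁ * σ₂ ∈ T := mem2 _ _ hss1 hss2
    have t2 : σ₁ * (h * k₂) ∈ T := by
      rw [hmove]
      refine smulT _ ?_
      have e : σ₁ * k₂ = σ₁ * c * d - σ₁ * d * c := by rw [hk2]; noncomm_ring
      rw [e]
      exact sub_mem (memP _ _ _ hss1 hc hd) (memP _ _ _ hss1 hd hc)
    have kk : k₁ * k₂ ∈ T := by
      have hq1 : star (k₁ * k₂ + k₂ * k₁) = k₁ * k₂ + k₂ * k₁ := by
        rw [star_add, star_mul, star_mul, hsk1, hsk2, neg_mul_neg, neg_mul_neg,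
          add_comm (k₂ * k₁)]
      have hu : star (k₁ * c - c * k₁) = k₁ * c - c * k₁ := by
        rw [star_sub, star_mul, star_mul, hsk1, hc, mul_neg, neg_mul]; abel
      have hv : star (k₁ * d - d * k₁) = k₁ * d - d * k₁ := by
        rw [star_sub, star_mul, star_mul, hsk1, hd, mul_neg, neg_mul]; abel
      have hq2 : k₁ * k₂ - k₂ * k₁ ∈ T := by
        have ejac : k₁ * k₂ - k₂ * k₁ =
            ((k₁ * c - c * k₁) * d - d * (k₁ * c - c * k₁)) +
            (c * (k₁ * d - d * k₁) - (k₁ * d - d * k₁) * c) := by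
          rw [hk2]; noncomm_ring
        rw [ejac]
        exact add_mem (sub_mem (mem2 _ _ hu hd) (mem2 _ _ hd hu))
          (sub_mem (mem2 _ _ hc hv) (mem2 _ _ hv hc))
      have esplit : k₁ * k₂ = h * (k₁ * k₂ + k₂ * k₁) + h * (k₁ * k₂ - k₂ * k₁) := by
        rw [← mul_add,
          show k₁ * k₂ + k₂ * k₁ + (k₁ * k₂ - k₂ * k₁) = k₁ * k₂ + k₁ * k₂ by abel,
          mul_add, hhalf]
      rw [esplit]
      exact add_mem (smulT _ (memS _ hq1)) (smulT _ hq2)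
    have t3 : (h * k₁) * σ₂ ∈ T := by
      have e : (h * k₁) * σ₂ = h * (a * b * σ₂ - b * a * σ₂) := by
        rw [hk1]; rw [mul_assoc]; congr 1; noncomm_ring
      rw [e]
      exact smulT _ (sub_mem (memP _ _ _ ha hb hss2) (memP _ _ _ hb ha hss2))
    have t4 : (h * k₁) * (h * k₂) ∈ T := by
      have e : (h * k₁) * (h * k₂) = h * (h * (k₁ * k₂)) := by
        rw [mul_assoc, hmove]
      rw [e]
      exact smulT _ (smulT _ kk)
    exact add_mem t1 (add_mem t2 (add_mem t3 t4))
  -- T is closed under multiplication by symmetric elements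
  have mulL : ∀ s : R, star s = s → ∀ t ∈ T, s * t ∈ T := by
    intro s hs t ht
    refine ind (fun t => s * t ∈ T) ?_ ?_ ?_ ?_ t ht
    · rintro z ⟨a, ha, b, hb, c, hc, rfl⟩
      have e : s * (a * b * c) = s * a * b * c := by rw [← mul_assoc, ← mul_assoc]
      rw [e]; exact key4 s a b c hs ha hb hc
    · show s * 0 ∈ T; rw [mul_zero]; exact zero_mem T
    · intro p q hp hq; show s * (p + q) ∈ T; rw [mul_add]; exact add_mem hp hq
    · intro p hp; show s * (-p) ∈ T; rw [mul_neg]; exact neg_mem hp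
  -- T is closed under multiplication
  have mulT : ∀ t₁ ∈ T, ∀ t₂ ∈ T, t₁ * t₂ ∈ T := by
    intro t₁ ht₁
    refine ind (fun t => ∀ t₂ ∈ T, t * t₂ ∈ T) ?_ ?_ ?_ ?_ t₁ ht₁
    · rintro z ⟨a, ha, b, hb, c, hc, rfl⟩ t₂ ht₂
      have e : a * b * c * t₂ = a * (b * (c * t₂)) := by rw [mul_assoc, mul_assoc]
      rw [e]; exact mulL a ha _ (mulL b hb _ (mulL c hc _ ht₂))
    · intro t₂ ht₂; show (0 : R) * t₂ ∈ T; rw [zero_mul]; exact zero_mem T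
    · intro p q hp hq t₂ ht₂; show (p + q) * t₂ ∈ T; rw [add_mul]
      exact add_mem (hp t₂ ht₂) (hq t₂ ht₂)
    · intro p hp t₂ ht₂; show (-p) * t₂ ∈ T; rw [neg_mul]; exact neg_mem (hp t₂ ht₂)
  -- commutation with skew elements
  have lieK : ∀ k : R, star k = -k → ∀ t ∈ T, k * t - t * k ∈ T := by
    intro k hk t ht
    refine ind (fun t => k * t - t * k ∈ T) ?_ ?_ ?_ ?_ t ht
    · rintro z ⟨a, ha, b, hb, c, hc, rfl⟩
      have ha' : star a = a := ha
      have hb' : star b = b := hb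
      have hc' : star c = c := hc
      have hca : star (k * a - a * k) = k * a - a * k := by
        rw [star_sub, star_mul, star_mul, hk, ha', mul_neg, neg_mul]; abel
      have hcb : star (k * b - b * k) = k * b - b * k := by
        rw [star_sub, star_mul, star_mul, hk, hb', mul_neg, neg_mul]; abel
      have hcc : star (k * c - c * k) = k * c - c * k := by
        rw [star_sub, star_mul, star_mul, hk, hc', mul_neg, neg_mul]; abel
      have iden : k * (a * b * c) - (a * b * c) * k =
          (k * a - a * k) * b * c + (a * (k * b - b * k) * c + a * b * (k * c - c * k)) := by
        noncomm_ring
      rw [iden]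
      exact add_mem (memP _ _ _ hca hb' hc')
        (add_mem (memP _ _ _ ha' hcb hc') (memP _ _ _ ha' hb' hcc))
    · show k * 0 - 0 * k ∈ T; rw [mul_zero, zero_mul, sub_zero]; exact zero_mem T
    · intro p q hp hq; show k * (p + q) - (p + q) * k ∈ T
      have e : k * (p + q) - (p + q) * k = (k * p - p * k) + (k * q - q * k) := by
        noncomm_ring
      rw [e]; exact add_mem hp hq
    · intro p hp; show k * (-p) - (-p) * k ∈ T
      have e : k * (-p) - (-p) * k = -(k * p - p * k) := by noncomm_ring
      rw [e]; exact neg_mem hp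
  -- T is a Lie ideal
  have lie : ∀ r : R, ∀ t ∈ T, r * t - t * r ∈ T := by
    intro r t ht
    have hss : star (h * (r + star r)) = h * (r + star r) := by
      rw [star_mul, hstar, star_add, star_star, ← hcomm, add_comm (star r)]
    have hsk : star (h * (r - star r)) = -(h * (r - star r)) := by
      rw [star_mul, hstar, star_sub, star_star, ← hcomm, ← mul_neg, neg_sub]
    have hdec : r = h * (r + star r) + h * (r - star r) := by
      rw [← mul_add, show r + star r + (r - star r) = r + r by abel, mul_add, hhalf]
    have m1 : h * (r + star r) * t - t * (h * (r + star r)) ∈ T := by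
      have m : h * (r + star r) ∈ T := memS _ hss
      exact sub_mem (mulT _ m _ ht) (mulT _ ht _ m)
    have m2 := lieK _ hsk t ht
    have e : r * t - t * r =
        (h * (r + star r) * t - t * (h * (r + star r))) +
        (h * (r - star r) * t - t * (h * (r - star r))) := by
      conv_lhs => rw [hdec]
      noncomm_ring
    rw [e]; exact add_mem m1 m2
  -- the additive closure of R·c·R is everything when c ≠ 0 (simplicity)
  have idealfull : ∀ c : R, c ≠ 0 →
      ∀ r : R, r ∈ AddSubgroup.closure {u : R | ∃ p q : R, u = p * c * q} := by
    intro c hcne r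
    set G : Set R := {u : R | ∃ p q : R, u = p * c * q} with hGdef
    have indG : ∀ (p : R → Prop), (∀ z ∈ G, p z) → p 0 →
        (∀ a b, p a → p b → p (a + b)) → (∀ a, p a → p (-a)) →
        ∀ t ∈ AddSubgroup.closure G, p t := by
      intro p hmem h0 hadd hneg t ht
      exact AddSubgroup.closure_induction (p := fun g _ => p g)
        (fun z hz => hmem z hz) h0 (fun a b _ _ => hadd a b) (fun a _ => hneg a) ht
    have Gl : ∀ {v u : R}, u ∈ AddSubgroup.closure G → v * u ∈ AddSubgroup.closure G := by
      intro v u hu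
      refine indG (fun u => v * u ∈ AddSubgroup.closure G) ?_ ?_ ?_ ?_ u hu
      · rintro z ⟨p, q, rfl⟩
        refine AddSubgroup.subset_closure ⟨v * p, q, ?_⟩
        rw [← mul_assoc, ← mul_assoc]
      · show v * 0 ∈ _; rw [mul_zero]; exact zero_mem _
      · intro a b hpa hpb; show v * (a + b) ∈ _; rw [mul_add]; exact add_mem hpa hpb
      · intro a hpa; show v * (-a) ∈ _; rw [mul_neg]; exact neg_mem hpa
    have Gr : ∀ {u v : R}, u ∈ AddSubgroup.closure G → u * v ∈ AddSubgroup.closure G := by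
      intro u v hu
      refine indG (fun u => u * v ∈ AddSubgroup.closure G) ?_ ?_ ?_ ?_ u hu
      · rintro z ⟨p, q, rfl⟩
        exact AddSubgroup.subset_closure ⟨p, q * v, by rw [← mul_assoc]⟩
      · show (0 : R) * v ∈ _; rw [zero_mul]; exact zero_mem _
      · intro a b hpa hpb; show (a + b) * v ∈ _; rw [add_mul]; exact add_mem hpa hpb
      · intro a hpa; show (-a) * v ∈ _; rw [neg_mul]; exact neg_mem hpa
    let J : TwoSidedIdeal R := TwoSidedIdeal.mk' (AddSubgroup.closure G : Set R)
      (zero_mem _) (fun hu hv => add_mem hu hv) (fun hu => neg_mem hu)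
      (fun hu => Gl hu) (fun hu => Gr hu)
    have hcJ : c ∈ J := by
      rw [TwoSidedIdeal.mem_mk']
      exact AddSubgroup.subset_closure ⟨1, 1, by rw [one_mul, mul_one]⟩
    haveI : IsSimpleOrder (TwoSidedIdeal R) := IsSimpleRing.simple
    rcases eq_bot_or_eq_top J with hbt | htop
    · rw [hbt, TwoSidedIdeal.mem_bot] at hcJ; exact absurd hcJ hcne
    · have : r ∈ J := by rw [htop]; exact TwoSidedIdeal.mem_top R
      rwa [TwoSidedIdeal.mem_mk'] at this
  -- main case split
  suffices hall : ∀ r : R, r ∈ T by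
    apply Set.eq_univ_of_forall
    intro r
    exact hall r
  have hxT : x ∈ T := memS x hx'
  by_cases hcase : ∀ w : R, x * (x * w - w * x) - (x * w - w * x) * x = 0
  · -- inner derivation by x squares to zero: contradiction with simplicity
    exfalso
    have d2 : ∀ a b : R, (x * a - a * x) * (x * b - b * x) = 0 := by
      intro a b
      have e : (x * a - a * x) * (x * b - b * x) + (x * a - a * x) * (x * b - b * x)
          = (x * (x * (a * b) - (a * b) * x) - (x * (a * b) - (a * b) * x) * x)
            - (x * (x * a - a * x) - (x * a - a * x) * x) * b
            - a * (x * (x * b - b * x) - (x * b - b * x) * x) := by noncomm_ring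
      rw [hcase (a * b), hcase a, hcase b, zero_mul, mul_zero, sub_zero, sub_zero] at e
      have := hhalf ((x * a - a * x) * (x * b - b * x))
      rw [← mul_add, e, mul_zero] at this
      exact this.symm
    have d3 : ∀ z : R, (x * y - y * x) * z * (x * y - y * x) = 0 := by
      intro z
      have e : (x * y - y * x) * z * (x * y - y * x)
          = (x * y - y * x) * (x * (z * y) - (z * y) * x)
            - ((x * y - y * x) * (x * z - z * x)) * y := by noncomm_ring
      rw [e, d2 y (z * y), d2 y z, zero_mul, sub_zero]
    have hc0ne : x * y - y * x ≠ 0 := sub_ne_zero.mpr hxy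
    have h1 := idealfull _ hc0ne 1
    have ann : ∀ u ∈ AddSubgroup.closure {u : R | ∃ p q : R, u = p * (x * y - y * x) * q},
        (x * y - y * x) * u = 0 := by
      intro u hu
      refine AddSubgroup.closure_induction (p := fun g _ => (x * y - y * x) * g = 0)
        ?_ ?_ ?_ ?_ hu
      · rintro z ⟨p, q, rfl⟩
        have e : (x * y - y * x) * (p * (x * y - y * x) * q)
            = ((x * y - y * x) * p * (x * y - y * x)) * q := by noncomm_ring
        rw [e, d3 p, zero_mul]
      · show (x * y - y * x) * 0 = 0; rw [mul_zero]
      · intro a b _ _ hpa hpb; show (x * y - y * x) * (a + b) = 0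
        rw [mul_add, hpa, hpb, add_zero]
      · intro a _ hpa; show (x * y - y * x) * (-a) = 0; rw [mul_neg, hpa, neg_zero]
    have := ann 1 h1
    rw [mul_one] at this
    exact hc0ne this
  · push_neg at hcase
    obtain ⟨w, hw⟩ := hcase
    set m : R := x * w - w * x with hmdef
    set c : R := x * m - m * x with hcdef
    have mT : m ∈ T := by
      have e : m = -(w * x - x * w) := by rw [hmdef, neg_sub]
      rw [e]; exact neg_mem (lie w x hxT)
    have zc : ∀ z : R, z * c ∈ T := by
      intro z
      have A : x * (z * m) - (z * m) * x ∈ T := by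
        have e : x * (z * m) - (z * m) * x = -((z * m) * x - x * (z * m)) := by
          rw [neg_sub]
        rw [e]; exact neg_mem (lie (z * m) x hxT)
      have B : (x * z - z * x) * m ∈ T := by
        have hxz : x * z - z * x ∈ T := by
          have e : x * z - z * x = -(z * x - x * z) := by rw [neg_sub]
          rw [e]; exact neg_mem (lie z x hxT)
        exact mulT _ hxz _ mT
      have e : z * c = (x * (z * m) - (z * m) * x) - (x * z - z * x) * m := by
        rw [hcdef]; noncomm_ring
      rw [e]; exact sub_mem A B
    have zcr : ∀ z r : R, z * c * r ∈ T := by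
      intro z r
      have h1 : r * (z * c) ∈ T := by
        have e : r * (z * c) = (r * z) * c := by rw [mul_assoc]
        rw [e]; exact zc (r * z)
      have h2 := lie r (z * c) (zc z)
      have e : z * c * r = r * (z * c) - (r * (z * c) - (z * c) * r) := by abel
      rw [e]; exact sub_mem h1 h2
    intro r
    have hr := idealfull c hw r
    refine AddSubgroup.closure_induction (p := fun g _ => g ∈ T) ?_ ?_ ?_ ?_ hr
    · rintro z ⟨p, q, rfl⟩; exact zcr p q
    · exact zero_mem T
    · intro a b _ _ hpa hpb; exact add_mem hpa hpb
    · intro a _ hpa; exact neg_mem hpa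
end

section
/- Let F be a field of characteristic ≠ 2 and R an associative unital F-algebra with an involution * of the first kind, and assume S ⊊ R. If there exist x, y ∈ S such that xy − yx is right invertible (i.e., there is z ∈ R with (xy − yx)z = 1), then every element r ∈ R can be written in the form r = λ + a₁b₁ + a₂b₂ + c₁d₁e₁ + c₂d₂e₂ where λ, a₁, b₁, a₂, b₂, c₁, d₁, e₁, c₂, d₂, e₂ all lie in S. -/
/-- If `xy − yx` is right invertible for some `x, y ∈ S`, then every element of `R`
can be written as `λ + a₁b₁ + a₂b₂ + c₁d₁e₁ + c₂d₂e₂` with all letters in `S`. -/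
theorem stmt_4 (F R : Type*) [Field F] [Ring R] [Algebra F R] [StarRing R]
    (hchar : (2 : F) ≠ 0)
    (hfirst : Set.center R ⊆ {r : R | star r = r})
    (hproper : {r : R | star r = r} ≠ Set.univ)
    (hinv : ∃ x ∈ {r : R | star r = r}, ∃ y ∈ {r : R | star r = r}, ∃ z : R,
      (x * y - y * x) * z = 1) :
    ∀ r : R, ∃ l a₁ b₁ a₂ b₂ c₁ d₁ e₁ c₂ d₂ e₂ : R,
      l ∈ {r : R | star r = r} ∧
      a₁ ∈ {r : R | star r = r} ∧ b₁ ∈ {r : R | star r = r} ∧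
      a₂ ∈ {r : R | star r = r} ∧ b₂ ∈ {r : R | star r = r} ∧
      c₁ ∈ {r : R | star r = r} ∧ d₁ ∈ {r : R | star r = r} ∧ e₁ ∈ {r : R | star r = r} ∧
      c₂ ∈ {r : R | star r = r} ∧ d₂ ∈ {r : R | star r = r} ∧ e₂ ∈ {r : R | star r = r} ∧
      r = l + a₁ * b₁ + a₂ * b₂ + c₁ * d₁ * e₁ + c₂ * d₂ * e₂ := by
  intro r
  obtain ⟨x, hx, y, hy, z, hz0⟩ := hinv
  simp only [Set.mem_setOf_eq] at hx hy
  obtain ⟨t, ht⟩ : ∃ t : R, t = x * y - y * x := ⟨_, rfl⟩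
  have hz : t * z = 1 := by rw [ht]; exact hz0
  -- t is skew
  have hts : star t = -t := by
    rw [ht]; simp [star_sub, star_mul, hx, hy]
  -- (-star z) is a left inverse of t
  have hlz : (-star z) * t = 1 := by
    have h1 := congrArg star hz
    rw [star_mul, star_one, hts] at h1
    calc (-star z) * t = star z * (-t) := by noncomm_ring
      _ = 1 := h1
  -- hence z is a two-sided inverse and z is skew
  have hnz : -star z = z := by
    have h2 : (-star z) = (-star z) * (t * z) := by rw [hz, mul_one]
    rw [← mul_assoc, hlz, one_mul] at h2
    exact h2
  have hzskew : star z = -z := by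
    calc star z = -(-star z) := (neg_neg _).symm
      _ = -z := by rw [hnz]
  have hzt : z * t = 1 := by rw [← hnz]; exact hlz
  -- the central element c = (2⁻¹ : F)
  obtain ⟨c, hcdef⟩ : ∃ c : R, c = algebraMap F R (2⁻¹ : F) := ⟨_, rfl⟩
  have hcomm : ∀ b : R, c * b = b * c := fun b => by rw [hcdef]; exact Algebra.commutes _ b
  have hcc : c ∈ Set.center R := by
    rw [Semigroup.mem_center_iff]
    exact fun g => (hcomm g).symm
  have hsc : star c = c := hfirst hcc
  have hc2 : c * 2 = 1 := by
    rw [hcdef, show ((2 : R) = algebraMap F R 2) from (map_ofNat _ 2).symm,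
      ← map_mul, inv_mul_cancel₀ hchar, map_one]
  obtain ⟨w, hw⟩ : ∃ w : R, w = r * z := ⟨_, rfl⟩
  obtain ⟨m, hm⟩ : ∃ m : R, m = z * star r := ⟨_, rfl⟩
  have hsw : star w = -m := by
    rw [hw, hm, star_mul, hzskew]; noncomm_ring
  have hsm : star m = -w := by
    rw [hw, hm, star_mul, star_star, hzskew]; noncomm_ring
  obtain ⟨ms, hms⟩ : ∃ v : R, v = c * (m - w) := ⟨_, rfl⟩
  obtain ⟨mk, hmk⟩ : ∃ v : R, v = c * (m + w) := ⟨_, rfl⟩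
  have hsms : star ms = ms := by
    rw [hms, star_mul, star_sub, hsm, hsw, hsc, hcomm]; noncomm_ring
  have hsmk : star mk = -mk := by
    rw [hmk, star_mul, star_add, hsm, hsw, hsc, hcomm]; noncomm_ring
  have key : mk = m - ms := by
    have h2m : c * (m + m) = m := by
      rw [show m + m = 2 * m by noncomm_ring, ← mul_assoc, hc2, one_mul]
    rw [hmk, hms]
    calc c * (m + w) = c * (m + m) - c * (m - w) := by noncomm_ring
      _ = m - c * (m - w) := by rw [h2m]
  have hrzt : r = r * z * (x * y) - r * z * (y * x) := by
    have h3 : r = r * (z * t) := by rw [hzt, mul_one]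
    rw [ht] at h3
    calc r = r * (z * (x * y - y * x)) := h3
      _ = r * z * (x * y) - r * z * (y * x) := by noncomm_ring
  refine ⟨x * mk * y - y * mk * x, -(w * y - y * m), x, w * x - x * m, y,
    x, ms, y, -y, ms, x, ?_, ?_, hx, ?_, hy, hx, hsms, hy, ?_, hsms, hx, ?_⟩
  · show star _ = _
    simp only [star_sub, star_mul, hx, hy, hsmk]
    noncomm_ring
  · show star _ = _
    simp only [star_neg, star_sub, star_mul, hy, hsw, hsm]
    noncomm_ring
  · show star _ = _
    simp only [star_sub, star_mul, hx, hsw, hsm]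
    noncomm_ring
  · show star (-y) = -y
    rw [star_neg, hy]
  · rw [key]
    conv_lhs => rw [hrzt]
    rw [hw, hm]
    noncomm_ring
end

section
/- Let F be a field of characteristic ≠ 2 and R a simple associative unital F-algebra with an involution * of the first kind, with S ⊊ R, and assume the dimension of R as a vector space over its center Z(R) (which is a field since R is simple) is strictly greater than 4. Then S is a commutative set (xy = yx for all x, y ∈ S) if and only if Z(R) = S. -/
/-- In a simple ring, an element `u` with `u * c * u = 0` for all `c` is zero. -/
lemma aux_sandwich_zero {R : Type*} [Ring R] [IsSimpleRing R] (u : R)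
    (h : ∀ c : R, u * c * u = 0) : u = 0 := by
  -- J = { y | ∀ c, u * c * y = 0 } is a two-sided ideal containing u
  let J : TwoSidedIdeal R := TwoSidedIdeal.mk' {y : R | ∀ c : R, u * c * y = 0}
    (fun c => by simp)
    (fun {x y} hx hy c => by rw [mul_add, hx c, hy c, add_zero])
    (fun {x} hx c => by rw [mul_neg, hx c, neg_zero])
    (fun {x y} hy c => by
      rw [show u * c * (x * y) = u * (c * x) * y by noncomm_ring, hy (c * x)])
    (fun {x y} hx c => by
      rw [show u * c * (x * y) = (u * c * x) * y by noncomm_ring, hx c, zero_mul])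
  have huJ : u ∈ J := by
    rw [TwoSidedIdeal.mem_mk']
    exact h
  rcases (IsSimpleRing.simple (R := R)).eq_bot_or_eq_top J with hb | ht
  · rw [hb, TwoSidedIdeal.mem_bot] at huJ
    exact huJ
  · have h1 : (1 : R) ∈ J := by rw [ht]; trivial
    rw [TwoSidedIdeal.mem_mk'] at h1
    simpa using h1 1

/-- In a simple algebra with involution of the first kind, `S ⊊ R` and
`dim_{Z(R)} R > 4`: `S` is a commutative set iff `Z(R) = S`. -/
theorem stmt_5 (F R : Type*) [Field F] [Ring R] [Algebra F R] [StarRing R]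
    [IsSimpleRing R]
    (hchar : (2 : F) ≠ 0)
    (hfirst : Set.center R ⊆ {r : R | star r = r})
    (hproper : {r : R | star r = r} ≠ Set.univ)
    (hdim : 4 < Module.rank (Subring.center R) R) :
    (∀ x ∈ {r : R | star r = r}, ∀ y ∈ {r : R | star r = r}, x * y = y * x) ↔
      Set.center R = {r : R | star r = r} := by
  have hc2 : IsUnit ((2 : F) • (1 : R)) := by
    have : IsUnit (algebraMap F R 2) := (isUnit_iff_ne_zero.mpr hchar).map (algebraMap F R)
    rwa [Algebra.algebraMap_eq_smul_one] at this
  have hcancel : ∀ x : R, x + x = 0 → x = 0 := by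
    intro x hx
    have h2x : ((2 : F) • (1 : R)) * x = 0 := by
      rw [smul_mul_assoc, one_mul, two_smul, hx]
    rcases hc2 with ⟨v, hv⟩
    calc x = ↑v⁻¹ * (↑v * x) := by rw [← mul_assoc, Units.inv_mul, one_mul]
    _ = 0 := by rw [hv, h2x, mul_zero]
  constructor
  · intro hcomm
    refine (Set.Subset.antisymm hfirst ?_)
    intro s hs
    have hs' : star s = s := hs
    rw [Semigroup.mem_center_iff]
    -- first: s commutes with every skew element
    have hskew : ∀ k : R, star k = -k → s * k = k * s := by
      intro k hk
      set u := s * k - k * s with hu_def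
      have hu : star u = u := by
        rw [hu_def, star_sub, star_mul, star_mul, hk, hs', mul_neg, neg_mul, sub_neg_eq_add]
        abel
      -- k² is symmetric, so s commutes with it: k*u + u*k = 0
      have hk2 : star (k * k) = k * k := by rw [star_mul, hk]; noncomm_ring
      have hkuuk : k * u + u * k = 0 := by
        have e : k * u + u * k = s * (k * k) - (k * k) * s := by
          rw [hu_def]; noncomm_ring
        rw [e, hcomm s hs' (k * k) hk2, sub_self]
      -- u*k is symmetric
      have huk : star (u * k) = u * k := by
        rw [star_mul, hk, hu, neg_mul, eq_neg_of_add_eq_zero_left hkuuk, neg_neg]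
      -- s commutes with u and with u*k, giving u² = 0
      have hsu : s * u = u * s := hcomm s hs' u hu
      have hsuk : s * (u * k) = (u * k) * s := hcomm s hs' (u * k) huk
      have hu2 : u * u = 0 := by
        have e : u * u = (s * (u * k) - (u * k) * s) - (s * u - u * s) * k := by
          rw [hu_def]; noncomm_ring
        rw [e, hsuk, hsu]; simp
      -- u annihilates R in sandwich: u * x * u = 0 for all x
      have hsand : ∀ x : R, u * x * u = 0 := by
        -- symmetric case
        have hsym0 : ∀ t : R, star t = t → u * t * u = 0 := by
          intro t ht
          have : u * t = t * u := hcomm u hu t ht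
          rw [this, mul_assoc, hu2, mul_zero]
        -- skew case
        have hskew0 : ∀ k' : R, star k' = -k' → u * k' * u = 0 := by
          intro k' hk'
          have ht : star (u * k' - k' * u) = u * k' - k' * u := by
            rw [star_sub, star_mul, star_mul, hk', hu, neg_mul, mul_neg]
            abel
          have hco := hcomm u hu (u * k' - k' * u) ht
          apply hcancel
          have e : u * k' * u + u * k' * u
              = ((u * k' - k' * u) * u - u * (u * k' - k' * u))
                + (u * u) * k' + k' * (u * u) := by
            noncomm_ring
          rw [e, ← hco, sub_self, hu2, zero_mul, mul_zero, zero_add, add_zero]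
        intro x
        apply hcancel
        have hxs : star (x + star x) = x + star x := by
          rw [star_add, star_star, add_comm]
        have hxk : star (x - star x) = -(x - star x) := by
          rw [star_sub, star_star]; abel
        have e : u * x * u + u * x * u = u * (x + star x) * u + u * (x - star x) * u := by
          noncomm_ring
        rw [e, hsym0 _ hxs, hskew0 _ hxk, add_zero]
      have : u = 0 := aux_sandwich_zero u hsand
      rw [hu_def] at this
      exact sub_eq_zero.mp this
    -- now: s commutes with everything
    intro g
    have hgs : star (g + star g) = g + star g := by rw [star_add, star_star, add_comm]
    have hgk : star (g - star g) = -(g - star g) := by rw [star_sub, star_star]; abel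
    have h1 := hcomm s hs' (g + star g) hgs
    have h2 := hskew (g - star g) hgk
    apply sub_eq_zero.mp
    apply hcancel
    have e : (g * s - s * g) + (g * s - s * g)
        = ((g + star g) * s - s * (g + star g)) + ((g - star g) * s - s * (g - star g)) := by
      noncomm_ring
    rw [e, ← h1, sub_self, ← h2, sub_self, add_zero]
  · intro h x hx y hy
    rw [← h] at hy
    exact Semigroup.mem_center_iff.mp hy x
end

section
/- Let F be a field of characteristic ≠ 2 and R a simple associative unital F-algebra with an involution * of the first kind such that Z(R) ⊊ S (strict containment) and S ⊊ R, and assume the dimension of R as a vector space over its center Z(R) is strictly greater than 4. Then S³ = R. -/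
/-- If `R` is simple, `Z(R) ⊊ S ⊊ R` and `dim_{Z(R)} R > 4`, then `S³ = R`. -/
theorem stmt_6 (F R : Type*) [Field F] [Ring R] [Algebra F R] [StarRing R]
    [IsSimpleRing R]
    (hchar : (2 : F) ≠ 0)
    (hfirst : Set.center R ⊂ {r : R | star r = r})
    (hproper : {r : R | star r = r} ≠ Set.univ)
    (hdim : 4 < Module.rank (Subring.center R) R) :
    (AddSubgroup.closure {z : R | ∃ a ∈ {r : R | star r = r},
        ∃ b ∈ {r : R | star r = r}, ∃ c ∈ {r : R | star r = r},
        z = a * b * c} : Set R) = Set.univ := by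
  classical
  set S : Set R := {r : R | star r = r} with hSdef
  set gens : Set R := {z : R | ∃ a ∈ S, ∃ b ∈ S, ∃ c ∈ S, z = a * b * c} with hgensdef
  set T : AddSubgroup R := AddSubgroup.closure gens with hTdef
  -- basic facts about S
  have sym : ∀ {x : R}, x ∈ S → star x = x := fun hx => hx
  have mkS : ∀ {x : R}, star x = x → x ∈ S := fun hx => hx
  have hZS : Set.center R ⊆ S := subset_of_ssubset hfirst
  have h1S : (1 : R) ∈ S := mkS (star_one R)
  have hSadd : ∀ {a b : R}, a ∈ S → b ∈ S → a + b ∈ S := by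
    intro a b ha hb
    exact mkS (by rw [star_add, sym ha, sym hb])
  have hmem3 : ∀ {a b c : R}, a ∈ S → b ∈ S → c ∈ S → a * b * c ∈ T :=
    fun ha hb hc => AddSubgroup.subset_closure ⟨_, ha, _, hb, _, hc, rfl⟩
  have hmem2 : ∀ {a b : R}, a ∈ S → b ∈ S → a * b ∈ T := by
    intro a b ha hb
    have := hmem3 ha hb h1S
    rwa [mul_one] at this
  have hmem1 : ∀ {a : R}, a ∈ S → a ∈ T := by
    intro a ha
    have := hmem2 ha h1S
    rwa [mul_one] at this
  -- the half element
  set h : R := algebraMap F R 2⁻¹ with hhdef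
  have hcomm : ∀ x : R, x * h = h * x := fun x => (Algebra.commutes _ _).symm
  have hcent : h ∈ Set.center R := Semigroup.mem_center_iff.mpr hcomm
  have hhS : h ∈ S := hZS hcent
  have hhalf : ∀ x : R, h * (x + x) = x := by
    intro x
    have h2 : h + h = 1 := by
      rw [hhdef, ← map_add, ← map_one (algebraMap F R)]
      congr 1
      field_simp
      norm_num
    calc h * (x + x) = (h + h) * x := by noncomm_ring
      _ = 1 * x := by rw [h2]
      _ = x := one_mul x
  -- generic closure-pushing lemma
  have key : ∀ (s : Set R) (H : AddSubgroup R) (f : R →+ R),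
      (∀ z ∈ s, f z ∈ H) → ∀ t ∈ AddSubgroup.closure s, f t ∈ H := by
    intro s H f hf t ht
    exact (AddSubgroup.closure_le (H.comap f)).2 (fun z hz => hf z hz) ht
  -- T is closed under multiplication by h
  have hhT : ∀ t ∈ T, h * t ∈ T := by
    refine key gens T (AddMonoidHom.mulLeft h) ?_
    rintro z ⟨a, ha, b, hb, c, hc, rfl⟩
    have hha : h * a ∈ S := mkS (by rw [star_mul, sym ha, sym hhS, hcomm])
    have e : (AddMonoidHom.mulLeft h) (a * b * c) = (h * a) * b * c := by
      simp only [AddMonoidHom.coe_mulLeft]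
      noncomm_ring
    rw [e]
    exact hmem3 hha hb hc
  have halfT : ∀ x : R, x + x ∈ T → x ∈ T := by
    intro x hx
    have := hhT _ hx
    rwa [hhalf] at this
  -- two-sided ideal generated by a nonzero element is everything
  have ideal_full : ∀ c : R, c ≠ 0 →
      ∀ r : R, r ∈ AddSubgroup.closure {z : R | ∃ x y : R, z = x * c * y} := by
    intro c hc r
    set Jc : AddSubgroup R := AddSubgroup.closure {z : R | ∃ x y : R, z = x * c * y} with hJcdef
    have hleft : ∀ (w : R) {t : R}, t ∈ Jc → w * t ∈ Jc := by
      intro w t ht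
      refine key _ Jc (AddMonoidHom.mulLeft w) ?_ t ht
      rintro z ⟨x, y, rfl⟩
      refine AddSubgroup.subset_closure ⟨w * x, y, ?_⟩
      simp only [AddMonoidHom.coe_mulLeft]
      noncomm_ring
    have hright : ∀ (w : R) {t : R}, t ∈ Jc → t * w ∈ Jc := by
      intro w t ht
      refine key _ Jc (AddMonoidHom.mulRight w) ?_ t ht
      rintro z ⟨x, y, rfl⟩
      refine AddSubgroup.subset_closure ⟨x, y * w, ?_⟩
      simp only [AddMonoidHom.coe_mulRight]
      noncomm_ring
    set J : TwoSidedIdeal R := TwoSidedIdeal.mk' (Jc : Set R)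
      (Jc.zero_mem) (fun hx hy => Jc.add_mem hx hy) (fun hx => Jc.neg_mem hx)
      (fun hy => hleft _ hy) (fun hx => hright _ hx) with hJdef
    have hcJ : c ∈ J := by
      rw [hJdef, TwoSidedIdeal.mem_mk']
      exact AddSubgroup.subset_closure ⟨1, 1, by noncomm_ring⟩
    have hJtop : J = ⊤ := by
      rcases IsSimpleRing.simple.eq_bot_or_eq_top J with hbot | htop
      · exfalso
        rw [hbot, TwoSidedIdeal.mem_bot] at hcJ
        exact hc hcJ
      · exact htop
    have : r ∈ J := by rw [hJtop]; exact TwoSidedIdeal.mem_top R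
    rwa [hJdef, TwoSidedIdeal.mem_mk'] at this
  -- primeness
  have prime : ∀ x y : R, (∀ z, x * z * y = 0) → x = 0 ∨ y = 0 := by
    intro x y hxy
    by_cases hx : x = 0
    · exact Or.inl hx
    · refine Or.inr ?_
      have h1 : (1 : R) ∈ AddSubgroup.closure {z : R | ∃ u v : R, z = u * x * v} :=
        ideal_full x hx 1
      have h2 := key {z : R | ∃ u v : R, z = u * x * v} ⊥ (AddMonoidHom.mulRight y) ?_ 1 h1
      · simpa using h2
      · rintro z ⟨u, v, rfl⟩
        have e : (AddMonoidHom.mulRight y) (u * x * v) = u * (x * v * y) := by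
          simp only [AddMonoidHom.coe_mulRight]
          noncomm_ring
        rw [e, hxy, mul_zero]
        exact AddSubgroup.zero_mem ⊥
  -- ad-squared lemma
  have adsq : ∀ b : R, (∀ r : R, b * (b * r - r * b) - (b * r - r * b) * b = 0) →
      b ∈ Set.center R := by
    intro b hb
    have hdm : ∀ r r' : R, (b * r - r * b) * (b * r' - r' * b) = 0 := by
      intro r r'
      have e1 : (b * r - r * b) * (b * r' - r' * b) + (b * r - r * b) * (b * r' - r' * b)
          = (b * (b * (r * r') - (r * r') * b) - (b * (r * r') - (r * r') * b) * b)
            - (b * (b * r - r * b) - (b * r - r * b) * b) * r'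
            - r * (b * (b * r' - r' * b) - (b * r' - r' * b) * b) := by noncomm_ring
      rw [hb, hb, hb, zero_mul, mul_zero, sub_zero, sub_zero] at e1
      have h2 := hhalf ((b * r - r * b) * (b * r' - r' * b))
      rw [e1, mul_zero] at h2
      exact h2.symm
    have hz : ∀ r z r' : R, (b * r - r * b) * z * (b * r' - r' * b) = 0 := by
      intro r z r'
      have e2 : (b * r - r * b) * z * (b * r' - r' * b)
          = (b * (r * z) - (r * z) * b) * (b * r' - r' * b)
            - r * ((b * z - z * b) * (b * r' - r' * b)) := by noncomm_ring
      rw [e2, hdm, hdm, mul_zero, sub_zero]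
    refine Semigroup.mem_center_iff.mpr (fun g => ?_)
    rcases prime (b * g - g * b) (b * g - g * b) (fun z => hz g z g) with h0 | h0 <;>
    · rw [sub_eq_zero] at h0
      exact h0.symm
  -- the F-identity : s k s - k s² ∈ T for symmetric s, skew k
  have hFF : ∀ s k : R, s ∈ S → star k = -k → s * k * s - k * (s * s) ∈ T := by
    intro s k hs hk
    have hA : (s * s) * k - k * (s * s) ∈ S := by
      refine mkS ?_
      simp only [star_sub, star_mul, sym hs, hk]
      noncomm_ring
    have hσ : k * s - s * k ∈ S := by
      refine mkS ?_
      simp only [star_sub, star_mul, sym hs, hk]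
      noncomm_ring
    have hB : s * (k * s - s * k) - (k * s - s * k) * s ∈ T :=
      sub_mem (hmem2 hs hσ) (hmem2 hσ hs)
    refine halfT _ ?_
    have e : (s * k * s - k * (s * s)) + (s * k * s - k * (s * s))
        = ((s * s) * k - k * (s * s)) + (s * (k * s - s * k) - (k * s - s * k) * s) := by
      noncomm_ring
    rw [e]
    exact add_mem (hmem1 hA) hB
  -- polarized version
  have hGG : ∀ s t k : R, s ∈ S → t ∈ S → star k = -k →
      s * k * t + t * k * s - k * (s * t + t * s) ∈ T := by
    intro s t k hs ht hk
    have h1 := hFF (s + t) k (hSadd hs ht) hk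
    have h2 := hFF s k hs hk
    have h3 := hFF t k ht hk
    have e : s * k * t + t * k * s - k * (s * t + t * s)
        = ((s + t) * k * (s + t) - k * ((s + t) * (s + t)))
          - (s * k * s - k * (s * s)) - (t * k * t - k * (t * t)) := by noncomm_ring
    rw [e]
    exact sub_mem (sub_mem h1 h2) h3
  -- S⁴ ⊆ T
  have hS4 : ∀ a b c d : R, a ∈ S → b ∈ S → c ∈ S → d ∈ S → a * b * c * d ∈ T := by
    intro a b c d ha hb hc hd
    have hk : star (b * c - c * b) = -(b * c - c * b) := by
      simp only [star_sub, star_mul, sym hb, sym hc]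
      noncomm_ring
    have hG := hGG a d (b * c - c * b) ha hd hk
    have hAsym : a * (b * c - c * b) * d - d * (b * c - c * b) * a ∈ S := by
      refine mkS ?_
      simp only [star_sub, star_mul, sym ha, sym hb, sym hc, sym hd]
      noncomm_ring
    have hσad : a * d + d * a ∈ S := by
      refine mkS ?_
      simp only [star_add, star_mul, sym ha, sym hd]
      abel
    have hB : (b * c - c * b) * (a * d + d * a) ∈ T := by
      have e : (b * c - c * b) * (a * d + d * a)
          = b * c * (a * d + d * a) - c * b * (a * d + d * a) := by noncomm_ring
      rw [e]
      exact sub_mem (hmem3 hb hc hσad) (hmem3 hc hb hσad)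
    have hakd : a * (b * c - c * b) * d ∈ T := by
      refine halfT _ ?_
      have e : a * (b * c - c * b) * d + a * (b * c - c * b) * d
          = (a * (b * c - c * b) * d + d * (b * c - c * b) * a
              - (b * c - c * b) * (a * d + d * a))
            + (a * (b * c - c * b) * d - d * (b * c - c * b) * a)
            + ((b * c - c * b) * (a * d + d * a)) := by noncomm_ring
      rw [e]
      exact add_mem (add_mem hG (hmem1 hAsym)) hB
    have hσbc : b * c + c * b ∈ S := by
      refine mkS ?_
      simp only [star_add, star_mul, sym hb, sym hc]
      abel
    refine halfT _ ?_
    have e : a * b * c * d + a * b * c * d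
        = a * (b * c + c * b) * d + a * (b * c - c * b) * d := by noncomm_ring
    rw [e]
    exact add_mem (hmem3 ha hσbc hd) hakd
  -- S·T ⊆ T and T·S ⊆ T
  have hST : ∀ {s : R}, s ∈ S → ∀ t ∈ T, s * t ∈ T := by
    intro s hs
    refine key gens T (AddMonoidHom.mulLeft s) ?_
    rintro z ⟨a, ha, b, hb, c, hc, rfl⟩
    have e : (AddMonoidHom.mulLeft s) (a * b * c) = s * a * b * c := by
      simp only [AddMonoidHom.coe_mulLeft]
      noncomm_ring
    rw [e]
    exact hS4 s a b c hs ha hb hc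
  have hTS : ∀ {s : R}, s ∈ S → ∀ t ∈ T, t * s ∈ T := by
    intro s hs
    refine key gens T (AddMonoidHom.mulRight s) ?_
    rintro z ⟨a, ha, b, hb, c, hc, rfl⟩
    have e : (AddMonoidHom.mulRight s) (a * b * c) = a * b * c * s := by
      simp only [AddMonoidHom.coe_mulRight]
    rw [e]
    exact hS4 a b c s ha hb hc hs
  -- T·T ⊆ T
  have hTT : ∀ u ∈ T, ∀ t ∈ T, u * t ∈ T := by
    intro u hu t ht
    revert u
    refine key gens T (AddMonoidHom.mulRight t) ?_
    rintro z ⟨a, ha, b, hb, c, hc, rfl⟩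
    have e : (AddMonoidHom.mulRight t) (a * b * c) = a * (b * (c * t)) := by
      simp only [AddMonoidHom.coe_mulRight]
      noncomm_ring
    rw [e]
    exact hST ha _ (hST hb _ (hST hc t ht))
  -- [k, T] ⊆ T for skew k
  have hkT : ∀ k : R, star k = -k → ∀ t ∈ T, k * t - t * k ∈ T := by
    intro k hk
    refine key gens T (AddMonoidHom.mulLeft k - AddMonoidHom.mulRight k) ?_
    rintro z ⟨a, ha, b, hb, c, hc, rfl⟩
    have hka : ∀ {x : R}, x ∈ S → k * x - x * k ∈ S := by
      intro x hx
      refine mkS ?_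
      simp only [star_sub, star_mul, sym hx, hk]
      noncomm_ring
    have e : (AddMonoidHom.mulLeft k - AddMonoidHom.mulRight k) (a * b * c)
        = (k * a - a * k) * b * c + a * (k * b - b * k) * c + a * b * (k * c - c * k) := by
      simp only [AddMonoidHom.sub_apply, AddMonoidHom.coe_mulLeft, AddMonoidHom.coe_mulRight]
      noncomm_ring
    rw [e]
    exact add_mem (add_mem (hmem3 (hka ha) hb hc) (hmem3 ha (hka hb) hc))
      (hmem3 ha hb (hka hc))
  -- [r, T] ⊆ T for all r
  have hrT : ∀ r : R, ∀ t ∈ T, r * t - t * r ∈ T := by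
    intro r t ht
    have hσS : h * (r + star r) ∈ S := by
      refine mkS ?_
      rw [star_mul, star_add, star_star, sym hhS, hcomm]
      rw [add_comm]
    have hκk : star (h * (r - star r)) = -(h * (r - star r)) := by
      rw [star_mul, star_sub, star_star, sym hhS, hcomm]
      noncomm_ring
    have hdecomp : h * (r + star r) + h * (r - star r) = r := by
      have e : h * (r + star r) + h * (r - star r) = h * (r + r) := by noncomm_ring
      rw [e, hhalf]
    have gen : ∀ σ κ x y : R, σ + κ = x →
        x * y - y * x = (σ * y - y * σ) + (κ * y - y * κ) := by
      intro σ κ x y hx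
      rw [← hx]
      noncomm_ring
    have e2 := gen (h * (r + star r)) (h * (r - star r)) r t hdecomp
    rw [e2]
    exact add_mem (sub_mem (hST hσS t ht) (hTS hσS t ht)) (hkT _ hκk t ht)
  -- finish
  rw [Set.eq_univ_iff_forall]
  intro r
  by_cases hcomm2 : ∀ u ∈ T, ∀ v ∈ T, u * v = v * u
  · exfalso
    obtain ⟨s₀, hs₀S, hs₀Z⟩ := Set.exists_of_ssubset hfirst
    refine hs₀Z (adsq s₀ ?_)
    intro x
    have h1 : s₀ * x - x * s₀ ∈ T := by
      have := hrT x s₀ (hmem1 hs₀S)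
      have e : s₀ * x - x * s₀ = -(x * s₀ - s₀ * x) := by noncomm_ring
      rw [e]
      exact neg_mem this
    have h2 := hcomm2 s₀ (hmem1 hs₀S) _ h1
    rw [h2, sub_self]
  · push_neg at hcomm2
    obtain ⟨u, hu, v, hv, huv⟩ := hcomm2
    have hc : u * v - v * u ≠ 0 := sub_ne_zero.2 huv
    have hcy : ∀ y : R, (u * v - v * u) * y ∈ T := by
      intro y
      have e : (u * v - v * u) * y
          = -((v * y) * u - u * (v * y)) - v * -(y * u - u * y) := by noncomm_ring
      rw [e]
      exact sub_mem (neg_mem (hrT (v * y) u hu)) (hTT v hv _ (neg_mem (hrT y u hu)))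
    have hxcy : ∀ x y : R, x * (u * v - v * u) * y ∈ T := by
      intro x y
      have e : x * (u * v - v * u) * y
          = (x * ((u * v - v * u) * y) - ((u * v - v * u) * y) * x)
            + (u * v - v * u) * (y * x) := by noncomm_ring
      rw [e]
      exact add_mem (hrT x _ (hcy y)) (hcy (y * x))
    have hr := ideal_full (u * v - v * u) hc r
    refine (AddSubgroup.closure_le T).2 ?_ hr
    rintro z ⟨x, y, rfl⟩
    exact hxcy x y
end

section
/- Let F be a field of characteristic ≠ 2 and R an associative unital F-algebra with an involution * of the first kind, and assume S ⊊ R. Let x, y ∈ S be such that xsy ∈ S² for every s ∈ S. Then for every r ∈ R, (xy − yx)r ∈ S²; in other words, the right ideal (xy − yx)R is contained in S². -/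
/-!
Since `2` is invertible, every `r` splits as `r = s + k` with `s` symmetric and `k` skew, so it
suffices to treat these two cases. For `k` skew,
`(xy - yx)k = x(yk - ky) - y(xk - kx) + (xky - ykx)` is a sum of elements of `S·S` and of `S`,
with no hypothesis on `x, y`. For `s` symmetric,
`(xy - yx)s = x(ys + sy) - xsy - y(xs + sx) + ysx`, where `xsy ∈ S²` by assumption and
`ysx = (xsy)* ∈ S²` because `S²` is closed under the involution.
-/

open Pointwise in
/-- The additive subgroup `S²` generated by products of two symmetric elements. -/
def selfAdjointSq (R : Type*) [Ring R] [StarRing R] : AddSubgroup R :=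
  AddSubgroup.closure ((selfAdjoint R : Set R) * selfAdjoint R)

section Ring

variable {R : Type*} [Ring R] [StarRing R]

theorem IsSelfAdjoint.mul_mem_selfAdjointSq {a b : R} (ha : IsSelfAdjoint a)
    (hb : IsSelfAdjoint b) : a * b ∈ selfAdjointSq R :=
  AddSubgroup.subset_closure (Set.mul_mem_mul ha hb)

theorem IsSelfAdjoint.mem_selfAdjointSq {a : R} (ha : IsSelfAdjoint a) :
    a ∈ selfAdjointSq R := by
  simpa using ha.mul_mem_selfAdjointSq (IsSelfAdjoint.one R)

theorem star_mem_selfAdjointSq {z : R} (hz : z ∈ selfAdjointSq R) :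
    star z ∈ selfAdjointSq R := by
  induction hz using AddSubgroup.closure_induction with
  | mem _ hw =>
    obtain ⟨a, ha, b, hb, rfl⟩ := hw
    rw [star_mul, ha.star_eq, hb.star_eq]
    exact hb.mul_mem_selfAdjointSq ha
  | zero => rw [star_zero]; exact zero_mem _
  | add _ _ _ _ hu hv => rw [star_add]; exact add_mem hu hv
  | neg _ _ hu => rw [star_neg]; exact neg_mem hu

theorem commutator_mul_mem_selfAdjointSq_of_mem_skewAdjoint {x y k : R}
    (hx : IsSelfAdjoint x) (hy : IsSelfAdjoint y) (hk : k ∈ skewAdjoint R) :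
    (x * y - y * x) * k ∈ selfAdjointSq R := by
  rw [skewAdjoint.mem_iff] at hk
  have hyk : IsSelfAdjoint (y * k - k * y) := by
    simp only [IsSelfAdjoint, star_sub, star_mul, hy.star_eq, hk, mul_neg, neg_mul,
      sub_neg_eq_add]
    abel
  have hxk : IsSelfAdjoint (x * k - k * x) := by
    simp only [IsSelfAdjoint, star_sub, star_mul, hx.star_eq, hk, mul_neg, neg_mul,
      sub_neg_eq_add]
    abel
  have hxky : IsSelfAdjoint (x * k * y - y * k * x) := by
    simp only [IsSelfAdjoint, star_sub, star_mul, hx.star_eq, hy.star_eq, hk, mul_neg, neg_mul,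
      neg_sub_neg, mul_assoc]
  have hid : (x * y - y * x) * k =
      x * (y * k - k * y) - y * (x * k - k * x) + (x * k * y - y * k * x) := by
    noncomm_ring
  rw [hid]
  exact add_mem (sub_mem (hx.mul_mem_selfAdjointSq hyk) (hy.mul_mem_selfAdjointSq hxk))
    hxky.mem_selfAdjointSq

theorem commutator_mul_mem_selfAdjointSq_of_isSelfAdjoint {x y s : R}
    (hx : IsSelfAdjoint x) (hy : IsSelfAdjoint y)
    (hxy : ∀ t, IsSelfAdjoint t → x * t * y ∈ selfAdjointSq R) (hs : IsSelfAdjoint s) :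
    (x * y - y * x) * s ∈ selfAdjointSq R := by
  have hysx : y * s * x ∈ selfAdjointSq R := by
    simpa only [star_mul, hx.star_eq, hy.star_eq, hs.star_eq, mul_assoc]
      using star_mem_selfAdjointSq (hxy s hs)
  have hid : (x * y - y * x) * s =
      (x * (y * s + s * y) - x * s * y) - (y * (x * s + s * x) - y * s * x) := by
    noncomm_ring
  rw [hid]
  refine sub_mem (sub_mem (hx.mul_mem_selfAdjointSq ?_) (hxy s hs))
    (sub_mem (hy.mul_mem_selfAdjointSq ?_) hysx)
  · simp [IsSelfAdjoint, star_mul, hy.star_eq, hs.star_eq, add_comm]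
  · simp [IsSelfAdjoint, star_mul, hx.star_eq, hs.star_eq, add_comm]

theorem exists_isSelfAdjoint_add_mem_skewAdjoint [Invertible (2 : R)] (r : R) :
    ∃ s k, IsSelfAdjoint s ∧ k ∈ skewAdjoint R ∧ r = s + k := by
  have hhalf : IsSelfAdjoint (⅟2 : R) := by
    refine (invOf_eq_left_inv ?_).symm
    calc star (⅟2 : R) * 2 = star (2 * ⅟2) := by rw [star_mul, star_ofNat]
      _ = 1 := by rw [mul_invOf_self, star_one]
  have hcomm (a : R) : ⅟2 * a = a * ⅟2 := (Commute.invOf_left (Commute.ofNat_left 2 a)).eq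
  refine ⟨⅟2 * (r + star r), ⅟2 * (r - star r), ?_, ?_, ?_⟩
  · rw [IsSelfAdjoint, star_mul, hhalf.star_eq, star_add, star_star, add_comm, hcomm]
  · rw [skewAdjoint.mem_iff, star_mul, hhalf.star_eq, star_sub, star_star, ← neg_sub, hcomm,
      neg_mul]
  · rw [← mul_add, add_add_sub_cancel, ← two_mul, invOf_mul_cancel_left]

end Ring

theorem stmt_7_general (F R : Type*) [Field F] [Ring R] [Algebra F R] [StarRing R]
    (hchar : (2 : F) ≠ 0) :
    ∀ x ∈ {r : R | star r = r}, ∀ y ∈ {r : R | star r = r},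
      (∀ s ∈ {r : R | star r = r}, x * s * y ∈
        AddSubgroup.closure {z : R | ∃ a ∈ {r : R | star r = r},
          ∃ b ∈ {r : R | star r = r}, z = a * b}) →
      ∀ r : R, (x * y - y * x) * r ∈
        AddSubgroup.closure {z : R | ∃ a ∈ {r : R | star r = r},
          ∃ b ∈ {r : R | star r = r}, z = a * b} := by
  intro x hx y hy hxy r
  have hS2 : AddSubgroup.closure {z : R | ∃ a ∈ {r : R | star r = r},
      ∃ b ∈ {r : R | star r = r}, z = a * b} = selfAdjointSq R := by
    rw [selfAdjointSq]
    congr 1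
    ext z
    simp only [Set.mem_ofPred_eq, Set.mem_mul, SetLike.mem_coe, selfAdjoint.mem_iff,
      eq_comm (a := z)]
  rw [hS2] at hxy ⊢
  have htwo : IsUnit (2 : R) := by
    simpa only [map_ofNat] using (IsUnit.mk0 _ hchar).map (algebraMap F R)
  let := htwo.invertible
  obtain ⟨s, k, hs, hk, rfl⟩ := exists_isSelfAdjoint_add_mem_skewAdjoint r
  rw [mul_add]
  exact add_mem (commutator_mul_mem_selfAdjointSq_of_isSelfAdjoint hx hy hxy hs)
    (commutator_mul_mem_selfAdjointSq_of_mem_skewAdjoint hx hy hk)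

/-- If `x, y ∈ S` satisfy `xSy ⊆ S²`, then `(xy − yx)R ⊆ S²`. -/
theorem stmt_7 (F R : Type*) [Field F] [Ring R] [Algebra F R] [StarRing R]
    (hchar : (2 : F) ≠ 0)
    (hfirst : Set.center R ⊆ {r : R | star r = r})
    (hproper : {r : R | star r = r} ≠ Set.univ) :
    ∀ x ∈ {r : R | star r = r}, ∀ y ∈ {r : R | star r = r},
      (∀ s ∈ {r : R | star r = r}, x * s * y ∈
        AddSubgroup.closure {z : R | ∃ a ∈ {r : R | star r = r},
          ∃ b ∈ {r : R | star r = r}, z = a * b}) →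
      ∀ r : R, (x * y - y * x) * r ∈
        AddSubgroup.closure {z : R | ∃ a ∈ {r : R | star r = r},
          ∃ b ∈ {r : R | star r = r}, z = a * b} :=
  stmt_7_general F R hchar
end

section
/- Let F be a field of characteristic ≠ 2 and R an associative unital F-algebra with an involution * of the first kind, and assume S ⊊ R. Let x, y ∈ S be such that xsy ∈ S² for every s ∈ S. Then for every u, r ∈ R, u(xy − yx)r ∈ S²; in other words, the two-sided ideal R(xy − yx)R is contained in S². -/
set_option maxHeartbeats 4000000 in
/-- If `x, y ∈ S` satisfy `xSy ⊆ S²`, then `R(xy − yx)R ⊆ S²`. -/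
theorem stmt_8 (F R : Type*) [Field F] [Ring R] [Algebra F R] [StarRing R]
    (hchar : (2 : F) ≠ 0)
    (hfirst : Set.center R ⊆ {r : R | star r = r})
    (hproper : {r : R | star r = r} ≠ Set.univ) :
    ∀ x ∈ {r : R | star r = r}, ∀ y ∈ {r : R | star r = r},
      (∀ s ∈ {r : R | star r = r}, x * s * y ∈
        AddSubgroup.closure {z : R | ∃ a ∈ {r : R | star r = r},
          ∃ b ∈ {r : R | star r = r}, z = a * b}) →
      ∀ u r : R, u * (x * y - y * x) * r ∈
        AddSubgroup.closure {z : R | ∃ a ∈ {r : R | star r = r},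
          ∃ b ∈ {r : R | star r = r}, z = a * b} := by
  intro x hx y hy hxy u r
  simp only [Set.mem_setOf_eq] at hx hy
  set G := AddSubgroup.closure {z : R | ∃ a ∈ {r : R | star r = r},
          ∃ b ∈ {r : R | star r = r}, z = a * b} with hGdef
  have hgen : ∀ a b : R, star a = a → star b = b → a * b ∈ G :=
    fun a b ha hb => AddSubgroup.subset_closure ⟨a, ha, b, hb, rfl⟩
  have hplus : ∀ m : R, m + star m ∈ G := by
    intro m
    have h : star (m + star m) = m + star m := by rw [star_add, star_star, add_comm]
    simpa using hgen (m + star m) 1 h (star_one R)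
  have hsmul : ∀ (α : F) (w : R), w ∈ G → α • w ∈ G := by
    intro α w hw
    have hcen : star (algebraMap F R α) = algebraMap F R α :=
      hfirst (Semigroup.mem_center_iff.2 fun b => (Algebra.commutes α b).symm)
    refine AddSubgroup.closure_induction ?_ ?_ ?_ ?_ hw
    · rintro z ⟨a, ha, b, hb, rfl⟩
      have ha' : star (algebraMap F R α * a) = algebraMap F R α * a := by
        rw [star_mul, hcen, ha, ← Algebra.commutes]
      have : α • (a * b) = (algebraMap F R α * a) * b := by
        rw [Algebra.smul_def, mul_assoc]
      rw [this]
      exact hgen _ _ ha' hb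
    · simpa using G.zero_mem
    · intro p q _ _ hp hq
      simpa [smul_add] using G.add_mem hp hq
    · intro p _ hp
      simpa [smul_neg] using G.neg_mem hp
  have g1 : x * y * r * u + (star u) * (star r) * y * x ∈ G := by
    simpa [star_mul, mul_assoc, hx, hy] using hplus (x * y * r * u)
  have g2 : x * y * r * (star u) + u * (star r) * y * x ∈ G := by
    simpa [star_mul, mul_assoc, hx, hy] using hplus (x * y * r * (star u))
  have g3 : x * u * y * r + (star r) * y * (star u) * x ∈ G := by
    simpa [star_mul, mul_assoc, hx, hy] using hplus (x * u * y * r)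
  have g4 : x * u * y * (star r) + r * y * (star u) * x ∈ G := by
    simpa [star_mul, mul_assoc, hx, hy] using hplus (x * u * y * (star r))
  have g5 : x * r * y * u + (star u) * y * (star r) * x ∈ G := by
    simpa [star_mul, mul_assoc, hx, hy] using hplus (x * r * y * u)
  have g6 : x * r * y * (star u) + u * y * (star r) * x ∈ G := by
    simpa [star_mul, mul_assoc, hx, hy] using hplus (x * r * y * (star u))
  have g7 : x * r * u * y + y * (star u) * (star r) * x ∈ G := by
    simpa [star_mul, mul_assoc, hx, hy] using hplus (x * r * u * y)
  have g8 : x * r * (star u) * y + y * u * (star r) * x ∈ G := by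
    simpa [star_mul, mul_assoc, hx, hy] using hplus (x * r * (star u) * y)
  have g9 : y * x * r * u + (star u) * (star r) * x * y ∈ G := by
    simpa [star_mul, mul_assoc, hx, hy] using hplus (y * x * r * u)
  have g10 : y * x * r * (star u) + u * (star r) * x * y ∈ G := by
    simpa [star_mul, mul_assoc, hx, hy] using hplus (y * x * r * (star u))
  have g11 : y * u * x * r + (star r) * x * (star u) * y ∈ G := by
    simpa [star_mul, mul_assoc, hx, hy] using hplus (y * u * x * r)
  have g12 : y * (star u) * x * r + (star r) * x * u * y ∈ G := by
    simpa [star_mul, mul_assoc, hx, hy] using hplus (y * (star u) * x * r)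
  have g13 : y * (star u) * x * (star r) + r * x * u * y ∈ G := by
    simpa [star_mul, mul_assoc, hx, hy] using hplus (y * (star u) * x * (star r))
  have g14 : y * r * x * u + (star u) * x * (star r) * y ∈ G := by
    simpa [star_mul, mul_assoc, hx, hy] using hplus (y * r * x * u)
  have g15 : y * (star r) * x * u + (star u) * x * r * y ∈ G := by
    simpa [star_mul, mul_assoc, hx, hy] using hplus (y * (star r) * x * u)
  have g16 : y * (star r) * x * (star u) + u * x * r * y ∈ G := by
    simpa [star_mul, mul_assoc, hx, hy] using hplus (y * (star r) * x * (star u))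
  have g17 : (star u) * y * x * r + (star r) * x * y * u ∈ G := by
    simpa [star_mul, mul_assoc, hx, hy] using hplus ((star u) * y * x * r)
  have g18 : (x + x) * (y * r * u + (star u) * (star r) * y) ∈ G :=
    hgen _ _ (by simp [star_add, star_mul, mul_assoc, hx, hy, add_comm]) (by simp [star_add, star_mul, mul_assoc, hx, hy, add_comm])
  have g19 : (x + x) * (y * r * (star u) + u * (star r) * y) ∈ G :=
    hgen _ _ (by simp [star_add, star_mul, mul_assoc, hx, hy, add_comm]) (by simp [star_add, star_mul, mul_assoc, hx, hy, add_comm])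
  have g20 : (x + x) * (u * y * (star r) + r * y * (star u)) ∈ G :=
    hgen _ _ (by simp [star_add, star_mul, mul_assoc, hx, hy, add_comm]) (by simp [star_add, star_mul, mul_assoc, hx, hy, add_comm])
  have g21 : (y + y) * (x * r * u + (star u) * (star r) * x) ∈ G :=
    hgen _ _ (by simp [star_add, star_mul, mul_assoc, hx, hy, add_comm]) (by simp [star_add, star_mul, mul_assoc, hx, hy, add_comm])
  have g22 : (y + y) * (x * r * (star u) + u * (star r) * x) ∈ G :=
    hgen _ _ (by simp [star_add, star_mul, mul_assoc, hx, hy, add_comm]) (by simp [star_add, star_mul, mul_assoc, hx, hy, add_comm])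
  have g23 : (y + y) * (u * x * r + (star r) * x * (star u)) ∈ G :=
    hgen _ _ (by simp [star_add, star_mul, mul_assoc, hx, hy, add_comm]) (by simp [star_add, star_mul, mul_assoc, hx, hy, add_comm])
  have g24 : (y + y) * ((star u) * x * r + (star r) * x * u) ∈ G :=
    hgen _ _ (by simp [star_add, star_mul, mul_assoc, hx, hy, add_comm]) (by simp [star_add, star_mul, mul_assoc, hx, hy, add_comm])
  have g25 : (y + y) * ((star u) * x * (star r) + r * x * u) ∈ G :=
    hgen _ _ (by simp [star_add, star_mul, mul_assoc, hx, hy, add_comm]) (by simp [star_add, star_mul, mul_assoc, hx, hy, add_comm])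
  have g26 : (u + (star u)) * (x * y * r + (star r) * y * x) ∈ G :=
    hgen _ _ (by simp [star_add, star_mul, mul_assoc, hx, hy, add_comm]) (by simp [star_add, star_mul, mul_assoc, hx, hy, add_comm])
  have g27 : (u + (star u)) * (x * r * y + y * (star r) * x) ∈ G :=
    hgen _ _ (by simp [star_add, star_mul, mul_assoc, hx, hy, add_comm]) (by simp [star_add, star_mul, mul_assoc, hx, hy, add_comm])
  have g28 : (u + (star u)) * (y * x * r + (star r) * x * y) ∈ G :=
    hgen _ _ (by simp [star_add, star_mul, mul_assoc, hx, hy, add_comm]) (by simp [star_add, star_mul, mul_assoc, hx, hy, add_comm])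
  have g29 : (r + (star r)) * (x * u * y + y * (star u) * x) ∈ G :=
    hgen _ _ (by simp [star_add, star_mul, mul_assoc, hx, hy, add_comm]) (by simp [star_add, star_mul, mul_assoc, hx, hy, add_comm])
  have g30 : (x * u + (star u) * x) * (y * r + (star r) * y) ∈ G :=
    hgen _ _ (by simp [star_add, star_mul, mul_assoc, hx, hy, add_comm]) (by simp [star_add, star_mul, mul_assoc, hx, hy, add_comm])
  have g31 : (x * r + (star r) * x) * (y * u + (star u) * y) ∈ G :=
    hgen _ _ (by simp [star_add, star_mul, mul_assoc, hx, hy, add_comm]) (by simp [star_add, star_mul, mul_assoc, hx, hy, add_comm])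
  have g32 : x * ((star u) * (star r) + r * u) * y ∈ G :=
    hxy _ (by simp [star_add, star_mul, mul_assoc, hx, hy, add_comm])
  have hE : -(x * y * r * u + (star u) * (star r) * y * x)
      - (x * y * r * u + (star u) * (star r) * y * x)
      - (x * y * r * (star u) + u * (star r) * y * x)
      - (x * y * r * (star u) + u * (star r) * y * x)
      + (x * u * y * r + (star r) * y * (star u) * x)
      + (x * u * y * r + (star r) * y * (star u) * x)
      + (x * u * y * (star r) + r * y * (star u) * x)
      + (x * u * y * (star r) + r * y * (star u) * x)
      + (x * r * y * u + (star u) * y * (star r) * x)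
      + (x * r * y * u + (star u) * y * (star r) * x)
      + (x * r * y * (star u) + u * y * (star r) * x)
      + (x * r * y * (star u) + u * y * (star r) * x)
      + (x * r * u * y + y * (star u) * (star r) * x)
      + (x * r * u * y + y * (star u) * (star r) * x)
      + (x * r * (star u) * y + y * u * (star r) * x)
      + (x * r * (star u) * y + y * u * (star r) * x)
      + (y * x * r * u + (star u) * (star r) * x * y)
      + (y * x * r * u + (star u) * (star r) * x * y)
      + (y * x * r * (star u) + u * (star r) * x * y)
      + (y * x * r * (star u) + u * (star r) * x * y)
      + (y * u * x * r + (star r) * x * (star u) * y)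
      + (y * u * x * r + (star r) * x * (star u) * y)
      + (y * (star u) * x * r + (star r) * x * u * y)
      + (y * (star u) * x * r + (star r) * x * u * y)
      + (y * (star u) * x * (star r) + r * x * u * y)
      + (y * (star u) * x * (star r) + r * x * u * y)
      + (y * r * x * u + (star u) * x * (star r) * y)
      + (y * r * x * u + (star u) * x * (star r) * y)
      + (y * (star r) * x * u + (star u) * x * r * y)
      + (y * (star r) * x * u + (star u) * x * r * y)
      + (y * (star r) * x * (star u) + u * x * r * y)
      + (y * (star r) * x * (star u) + u * x * r * y)
      + ((star u) * y * x * r + (star r) * x * y * u)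
      + ((star u) * y * x * r + (star r) * x * y * u)
      + ((x + x) * (y * r * u + (star u) * (star r) * y))
      + ((x + x) * (y * r * (star u) + u * (star r) * y))
      - ((x + x) * (u * y * (star r) + r * y * (star u)))
      - ((y + y) * (x * r * u + (star u) * (star r) * x))
      - ((y + y) * (x * r * (star u) + u * (star r) * x))
      - ((y + y) * (u * x * r + (star r) * x * (star u)))
      - ((y + y) * ((star u) * x * r + (star r) * x * u))
      - ((y + y) * ((star u) * x * (star r) + r * x * u))
      + ((u + (star u)) * (x * y * r + (star r) * y * x))
      + ((u + (star u)) * (x * y * r + (star r) * y * x))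
      - ((u + (star u)) * (x * r * y + y * (star r) * x))
      - ((u + (star u)) * (x * r * y + y * (star r) * x))
      - ((u + (star u)) * (y * x * r + (star r) * x * y))
      - ((u + (star u)) * (y * x * r + (star r) * x * y))
      - ((r + (star r)) * (x * u * y + y * (star u) * x))
      - ((r + (star r)) * (x * u * y + y * (star u) * x))
      - ((x * u + (star u) * x) * (y * r + (star r) * y))
      - ((x * u + (star u) * x) * (y * r + (star r) * y))
      - ((x * r + (star r) * x) * (y * u + (star u) * y))
      - ((x * r + (star r) * x) * (y * u + (star u) * y))
      - (x * ((star u) * (star r) + r * u) * y)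
      - (x * ((star u) * (star r) + r * u) * y)
      ∈ G := (sub_mem (sub_mem (sub_mem (sub_mem (sub_mem (sub_mem (sub_mem (sub_mem (sub_mem (sub_mem (sub_mem (sub_mem (add_mem (add_mem (sub_mem (sub_mem (sub_mem (sub_mem (sub_mem (sub_mem (add_mem (add_mem (add_mem (add_mem (add_mem (add_mem (add_mem (add_mem (add_mem (add_mem (add_mem (add_mem (add_mem (add_mem (add_mem (add_mem (add_mem (add_mem (add_mem (add_mem (add_mem (add_mem (add_mem (add_mem (add_mem (add_mem (add_mem (add_mem (add_mem (add_mem (add_mem (add_mem (sub_mem (sub_mem (sub_mem (neg_mem g1) g1) g2) g2) g3) g3) g4) g4) g5) g5) g6) g6) g7) g7) g8) g8) g9) g9) g10) g10) g11) g11) g12) g12) g13) g13) g14) g14) g15) g15) g16) g16) g17) g17) g18) g19) g20) g21) g22) g23) g24) g25) g26) g26) g27) g27) g28) g28) g29) g29) g30) g30) g31) g31) g32) g32)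
  have key : u * (x * y - y * x) * r + u * (x * y - y * x) * r
      = -(x * y * r * u + (star u) * (star r) * y * x)
      - (x * y * r * u + (star u) * (star r) * y * x)
      - (x * y * r * (star u) + u * (star r) * y * x)
      - (x * y * r * (star u) + u * (star r) * y * x)
      + (x * u * y * r + (star r) * y * (star u) * x)
      + (x * u * y * r + (star r) * y * (star u) * x)
      + (x * u * y * (star r) + r * y * (star u) * x)
      + (x * u * y * (star r) + r * y * (star u) * x)
      + (x * r * y * u + (star u) * y * (star r) * x)
      + (x * r * y * u + (star u) * y * (star r) * x)
      + (x * r * y * (star u) + u * y * (star r) * x)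
      + (x * r * y * (star u) + u * y * (star r) * x)
      + (x * r * u * y + y * (star u) * (star r) * x)
      + (x * r * u * y + y * (star u) * (star r) * x)
      + (x * r * (star u) * y + y * u * (star r) * x)
      + (x * r * (star u) * y + y * u * (star r) * x)
      + (y * x * r * u + (star u) * (star r) * x * y)
      + (y * x * r * u + (star u) * (star r) * x * y)
      + (y * x * r * (star u) + u * (star r) * x * y)
      + (y * x * r * (star u) + u * (star r) * x * y)
      + (y * u * x * r + (star r) * x * (star u) * y)
      + (y * u * x * r + (star r) * x * (star u) * y)
      + (y * (star u) * x * r + (star r) * x * u * y)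
      + (y * (star u) * x * r + (star r) * x * u * y)
      + (y * (star u) * x * (star r) + r * x * u * y)
      + (y * (star u) * x * (star r) + r * x * u * y)
      + (y * r * x * u + (star u) * x * (star r) * y)
      + (y * r * x * u + (star u) * x * (star r) * y)
      + (y * (star r) * x * u + (star u) * x * r * y)
      + (y * (star r) * x * u + (star u) * x * r * y)
      + (y * (star r) * x * (star u) + u * x * r * y)
      + (y * (star r) * x * (star u) + u * x * r * y)
      + ((star u) * y * x * r + (star r) * x * y * u)
      + ((star u) * y * x * r + (star r) * x * y * u)
      + ((x + x) * (y * r * u + (star u) * (star r) * y))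
      + ((x + x) * (y * r * (star u) + u * (star r) * y))
      - ((x + x) * (u * y * (star r) + r * y * (star u)))
      - ((y + y) * (x * r * u + (star u) * (star r) * x))
      - ((y + y) * (x * r * (star u) + u * (star r) * x))
      - ((y + y) * (u * x * r + (star r) * x * (star u)))
      - ((y + y) * ((star u) * x * r + (star r) * x * u))
      - ((y + y) * ((star u) * x * (star r) + r * x * u))
      + ((u + (star u)) * (x * y * r + (star r) * y * x))
      + ((u + (star u)) * (x * y * r + (star r) * y * x))
      - ((u + (star u)) * (x * r * y + y * (star r) * x))
      - ((u + (star u)) * (x * r * y + y * (star r) * x))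
      - ((u + (star u)) * (y * x * r + (star r) * x * y))
      - ((u + (star u)) * (y * x * r + (star r) * x * y))
      - ((r + (star r)) * (x * u * y + y * (star u) * x))
      - ((r + (star r)) * (x * u * y + y * (star u) * x))
      - ((x * u + (star u) * x) * (y * r + (star r) * y))
      - ((x * u + (star u) * x) * (y * r + (star r) * y))
      - ((x * r + (star r) * x) * (y * u + (star u) * y))
      - ((x * r + (star r) * x) * (y * u + (star u) * y))
      - (x * ((star u) * (star r) + r * u) * y)
      - (x * ((star u) * (star r) + r * u) * y) := by
    noncomm_ring
  have h2 : (2 : F) • (u * (x * y - y * x) * r) ∈ G := by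
    rw [two_smul, key]; exact hE
  have h3 := hsmul ((2 : F)⁻¹) _ h2
  simpa [smul_smul, inv_mul_cancel₀ hchar] using h3
end

section
/- Let F be a field of characteristic ≠ 2 and R a simple associative unital F-algebra with an involution * of the first kind, and assume S ⊊ R. If there exist x, y ∈ S such that xy − yx ≠ 0 and xsy ∈ S² for every s ∈ S, then S² = R. -/
/-!
Let `W = S²`. Using `r = ½(r + r*) + ½(r - r*)` to split every element into a symmetric and a
skew part, one checks that `W` is a Lie ideal of `R`: `[W, R] ⊆ W`. For `c = xy - yx`, the
hypothesis `xSy ⊆ W` together with the Lie ideal property then gives `Rc ⊆ W`, hence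
`RcR ⊆ W`. The elements `r` with `RrR ⊆ W` form a two-sided ideal containing `c ≠ 0`, so by
simplicity it is all of `R`, and in particular `W = R`.
-/

section SymmetricSq

variable {R : Type*} [Ring R] [StarRing R]

variable (R) in
def symmetricSq : AddSubgroup R :=
  AddSubgroup.closure {z : R | ∃ a ∈ {r : R | star r = r}, ∃ b ∈ {r : R | star r = r}, z = a * b}

theorem mul_mem_symmetricSq {a b : R} (ha : star a = a) (hb : star b = b) :
    a * b ∈ symmetricSq R :=
  AddSubgroup.subset_closure ⟨a, ha, b, hb, rfl⟩

theorem mem_symmetricSq_of_star_eq {a : R} (ha : star a = a) : a ∈ symmetricSq R := by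
  simpa using mul_mem_symmetricSq ha (star_one R)

theorem add_star_mem_symmetricSq (r : R) : r + star r ∈ symmetricSq R :=
  mem_symmetricSq_of_star_eq (by rw [star_add, star_star, add_comm])

theorem commutator_mem_symmetricSq {a b : R} (ha : star a = a) (hb : star b = b) :
    a * b - b * a ∈ symmetricSq R :=
  sub_mem (mul_mem_symmetricSq ha hb) (mul_mem_symmetricSq hb ha)

theorem star_mem_symmetricSq {w : R} (hw : w ∈ symmetricSq R) : star w ∈ symmetricSq R := by
  induction hw using AddSubgroup.closure_induction with
  | mem z hz =>
    obtain ⟨a, ha, b, hb, rfl⟩ := hz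
    rw [star_mul, ha, hb]
    exact mul_mem_symmetricSq hb ha
  | zero => simp
  | add u v _ _ hu hv => rw [star_add]; exact add_mem hu hv
  | neg u _ hu => rw [star_neg]; exact neg_mem hu

section Half

variable [Invertible (2 : R)]

theorem invOf_two_mul_mem_symmetricSq {w : R} (hw : w ∈ symmetricSq R) :
    ⅟2 * w ∈ symmetricSq R := by
  have hstar : star (⅟2 : R) = ⅟2 := by
    refine (invOf_eq_left_inv ?_).symm
    calc star (⅟2 : R) * 2 = star (2 * ⅟2 : R) := by rw [star_mul, star_ofNat]
      _ = 1 := by rw [mul_invOf_self, star_one]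
  induction hw using AddSubgroup.closure_induction with
  | mem z hz =>
    obtain ⟨a, ha, b, hb, rfl⟩ := hz
    rw [← mul_assoc]
    refine mul_mem_symmetricSq ?_ hb
    rw [star_mul, ha, hstar]
    exact ((Commute.ofNat_left 2 a).invOf_left).symm.eq
  | zero => simp
  | add u v _ _ hu hv => rw [mul_add]; exact add_mem hu hv
  | neg u _ hu => rw [mul_neg]; exact neg_mem hu

theorem mem_symmetricSq_of_add_self_mem {w : R} (hw : w + w ∈ symmetricSq R) :
    w ∈ symmetricSq R := by
  simpa [← two_mul, ← mul_assoc] using invOf_two_mul_mem_symmetricSq hw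

theorem map_mem_symmetricSq_of_symm_of_skew (f : R →+ R)
    (hsymm : ∀ p : R, star p = p → f p ∈ symmetricSq R)
    (hskew : ∀ q : R, star q = -q → f q ∈ symmetricSq R) (r : R) : f r ∈ symmetricSq R := by
  refine mem_symmetricSq_of_add_self_mem ?_
  have hsplit : f r + f r = f (r + star r) + f (r - star r) := by
    rw [← map_add, ← map_add]; congr 1; abel
  rw [hsplit]
  exact add_mem (hsymm _ (by rw [star_add, star_star, add_comm]))
    (hskew _ (by rw [star_sub, star_star, neg_sub]))

theorem skew_mul_commutator_mem_symmetricSq {q a b : R} (hq : star q = -q) (ha : star a = a)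
    (hb : star b = b) : q * (a * b - b * a) ∈ symmetricSq R := by
  refine mem_symmetricSq_of_add_self_mem ?_
  have hqa : star (q * a - a * q) = q * a - a * q := by
    rw [star_sub, star_mul, star_mul, hq, ha]; noncomm_ring
  have hqb : star (q * b - b * q) = q * b - b * q := by
    rw [star_sub, star_mul, star_mul, hq, hb]; noncomm_ring
  have hsymm : star (q * (a * b - b * a) + (a * b - b * a) * q) =
      q * (a * b - b * a) + (a * b - b * a) * q := by
    rw [star_add, star_mul, star_mul, star_sub, star_mul, star_mul, ha, hb, hq]; noncomm_ring
  -- the skew part `[q, [a, b]]` is expanded by the Jacobi identity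
  have hsplit : q * (a * b - b * a) + q * (a * b - b * a) =
      (q * (a * b - b * a) + (a * b - b * a) * q) +
        ((q * a - a * q) * b - b * (q * a - a * q)) -
          ((q * b - b * q) * a - a * (q * b - b * q)) := by noncomm_ring
  rw [hsplit]
  exact sub_mem (add_mem (mem_symmetricSq_of_star_eq hsymm) (commutator_mem_symmetricSq hqa hb))
    (commutator_mem_symmetricSq hqb ha)

theorem commutator_mem_symmetricSq_of_mem {w : R} (hw : w ∈ symmetricSq R) (r : R) :
    w * r - r * w ∈ symmetricSq R := by
  induction hw using AddSubgroup.closure_induction generalizing r with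
  | mem z hz =>
    obtain ⟨a, ha, b, hb, rfl⟩ := hz
    refine map_mem_symmetricSq_of_symm_of_skew
      (AddMonoidHom.mulLeft (a * b) - AddMonoidHom.mulRight (a * b)) (fun p hp => ?_)
      (fun q hq => ?_) r
    · show a * b * p - p * (a * b) ∈ _
      have hab : star (a * b + b * a) = a * b + b * a := by
        rw [star_add, star_mul, star_mul, ha, hb, add_comm]
      have hsplit : a * b * p - p * (a * b) =
          (a * b * p + star (a * b * p)) - p * (a * b + b * a) := by
        rw [star_mul, star_mul, ha, hb, hp]; noncomm_ring
      rw [hsplit]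
      exact sub_mem (add_star_mem_symmetricSq _) (mul_mem_symmetricSq hp hab)
    · show a * b * q - q * (a * b) ∈ _
      have hsplit : a * b * q - q * (a * b) =
          (a * b * q + star (a * b * q)) - q * (a * b - b * a) := by
        rw [star_mul, star_mul, ha, hb, hq]; noncomm_ring
      rw [hsplit]
      exact sub_mem (add_star_mem_symmetricSq _)
        (skew_mul_commutator_mem_symmetricSq hq ha hb)
  | zero => simp
  | add u v _ _ hu hv =>
    have hsplit : (u + v) * r - r * (u + v) = (u * r - r * u) + (v * r - r * v) := by
      noncomm_ring
    rw [hsplit]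
    exact add_mem (hu r) (hv r)
  | neg u _ hu =>
    have hsplit : -u * r - r * -u = -(u * r - r * u) := by noncomm_ring
    rw [hsplit]
    exact neg_mem (hu r)

theorem mul_commutator_mem_symmetricSq {x y : R} (hx : star x = x) (hy : star y = y)
    (hxsy : ∀ s : R, star s = s → x * s * y ∈ symmetricSq R) (r : R) :
    r * (x * y - y * x) ∈ symmetricSq R := by
  have hxW := mem_symmetricSq_of_star_eq hx
  have hyW := mem_symmetricSq_of_star_eq hy
  refine map_mem_symmetricSq_of_symm_of_skew (AddMonoidHom.mulRight (x * y - y * x))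
    (fun p hp => ?_) (fun q hq => ?_) r
  · show p * (x * y - y * x) ∈ _
    have hpW := mem_symmetricSq_of_star_eq hp
    have hsplit : p * (x * y - y * x) =
        ((p * (x * y) - x * y * p) + (x * (y * p) - y * p * x) + star (x * p * y)) -
          ((p * (y * x) - y * x * p) + (y * (x * p) - x * p * y) + x * p * y) := by
      rw [star_mul, star_mul, hx, hy, hp]; noncomm_ring
    rw [hsplit]
    exact sub_mem
      (add_mem (add_mem (commutator_mem_symmetricSq_of_mem hpW _)
        (commutator_mem_symmetricSq_of_mem hxW _)) (star_mem_symmetricSq (hxsy p hp)))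
      (add_mem (add_mem (commutator_mem_symmetricSq_of_mem hpW _)
        (commutator_mem_symmetricSq_of_mem hyW _)) (hxsy p hp))
  · show q * (x * y - y * x) ∈ _
    have hsplit : q * (x * y - y * x) =
        (q * x * y + star (q * x * y)) + (y * (x * q) - x * q * y) +
          (x * (q * y) - q * y * x) := by
      rw [star_mul, star_mul, hx, hy, hq]; noncomm_ring
    rw [hsplit]
    exact add_mem (add_mem (add_star_mem_symmetricSq _)
      (commutator_mem_symmetricSq_of_mem hyW _)) (commutator_mem_symmetricSq_of_mem hxW _)

theorem mul_commutator_mul_mem_symmetricSq {x y : R} (hx : star x = x) (hy : star y = y)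
    (hxsy : ∀ s : R, star s = s → x * s * y ∈ symmetricSq R) (a b : R) :
    a * (x * y - y * x) * b ∈ symmetricSq R := by
  have hsplit : a * (x * y - y * x) * b =
      (a * (x * y - y * x) * b - b * (a * (x * y - y * x))) + b * a * (x * y - y * x) := by
    noncomm_ring
  rw [hsplit]
  exact add_mem (commutator_mem_symmetricSq_of_mem
    (mul_commutator_mem_symmetricSq hx hy hxsy a) b) (mul_commutator_mem_symmetricSq hx hy hxsy _)

end Half

end SymmetricSq

section TwoSidedCore

variable {R : Type*} [Ring R]

def AddSubgroup.twoSidedCore (W : AddSubgroup R) : TwoSidedIdeal R :=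
  TwoSidedIdeal.mk' {r : R | ∀ a b : R, a * r * b ∈ W}
    (fun a b => by simp)
    (fun hu hv a b => by rw [mul_add, add_mul]; exact add_mem (hu a b) (hv a b))
    (fun hu a b => by rw [mul_neg, neg_mul]; exact neg_mem (hu a b))
    (fun {t _} hu a b => by rw [← mul_assoc]; exact hu (a * t) b)
    (fun {_ t} hu a b => by rw [← mul_assoc, mul_assoc _ _ b]; exact hu a (t * b))

theorem AddSubgroup.mem_twoSidedCore {W : AddSubgroup R} {r : R} :
    r ∈ W.twoSidedCore ↔ ∀ a b : R, a * r * b ∈ W :=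
  TwoSidedIdeal.mem_mk' ..

theorem AddSubgroup.eq_top_of_mul_mul_mem [IsSimpleRing R] (W : AddSubgroup R) {c : R}
    (hc : c ≠ 0) (hW : ∀ a b : R, a * c * b ∈ W) : W = ⊤ := by
  have hcore : W.twoSidedCore = ⊤ := by
    refine (IsSimpleRing.simple.eq_bot_or_eq_top _).resolve_left fun hbot => hc ?_
    rw [← TwoSidedIdeal.mem_bot, ← hbot]
    exact AddSubgroup.mem_twoSidedCore.2 hW
  refine eq_top_iff.2 fun r _ => ?_
  simpa using AddSubgroup.mem_twoSidedCore.1 (hcore ▸ TwoSidedIdeal.mem_top R : r ∈ _) 1 1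

end TwoSidedCore

theorem symmetricSq_eq_top {R : Type*} [Ring R] [StarRing R] [IsSimpleRing R]
    [Invertible (2 : R)] {x y : R} (hx : star x = x) (hy : star y = y)
    (hxy : x * y - y * x ≠ 0) (hxsy : ∀ s : R, star s = s → x * s * y ∈ symmetricSq R) :
    symmetricSq R = ⊤ :=
  (symmetricSq R).eq_top_of_mul_mul_mem hxy (mul_commutator_mul_mem_symmetricSq hx hy hxsy)

theorem stmt_9_general (F R : Type*) [Field F] [Ring R] [Algebra F R] [StarRing R]
    [IsSimpleRing R]
    (hchar : (2 : F) ≠ 0)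
    (hxy : ∃ x ∈ {r : R | star r = r}, ∃ y ∈ {r : R | star r = r},
      x * y - y * x ≠ 0 ∧
      ∀ s ∈ {r : R | star r = r}, x * s * y ∈
        AddSubgroup.closure {z : R | ∃ a ∈ {r : R | star r = r},
          ∃ b ∈ {r : R | star r = r}, z = a * b}) :
    (AddSubgroup.closure {z : R | ∃ a ∈ {r : R | star r = r},
        ∃ b ∈ {r : R | star r = r}, z = a * b} : Set R) = Set.univ := by
  obtain ⟨x, hx, y, hy, hxy, hxsy⟩ := hxy
  have htwo := (IsUnit.mk0 _ hchar).map (algebraMap F R)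
  rw [map_ofNat] at htwo
  have : Invertible (2 : R) := htwo.invertible
  change (symmetricSq R : Set R) = Set.univ
  rw [symmetricSq_eq_top hx hy hxy hxsy, AddSubgroup.coe_top]

/-- If `R` is simple and there exist `x, y ∈ S` with `xy − yx ≠ 0` and `xSy ⊆ S²`,
then `S² = R`. -/
theorem stmt_9 (F R : Type*) [Field F] [Ring R] [Algebra F R] [StarRing R]
    [IsSimpleRing R]
    (hchar : (2 : F) ≠ 0)
    (hfirst : Set.center R ⊆ {r : R | star r = r})
    (hproper : {r : R | star r = r} ≠ Set.univ)
    (hxy : ∃ x ∈ {r : R | star r = r}, ∃ y ∈ {r : R | star r = r},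
      x * y - y * x ≠ 0 ∧
      ∀ s ∈ {r : R | star r = r}, x * s * y ∈
        AddSubgroup.closure {z : R | ∃ a ∈ {r : R | star r = r},
          ∃ b ∈ {r : R | star r = r}, z = a * b}) :
    (AddSubgroup.closure {z : R | ∃ a ∈ {r : R | star r = r},
        ∃ b ∈ {r : R | star r = r}, z = a * b} : Set R) = Set.univ :=
  stmt_9_general F R hchar hxy
end

section
/- Let F be a field of characteristic ≠ 2 and R a simple associative unital F-algebra with an involution * of the first kind, with S ⊊ R, and assume S is not a commutative set (there exist a, b ∈ S with ab ≠ ba). Then the following are equivalent: (1) there exist x, y ∈ S such that xy − yx ≠ 0 and xsy ∈ S² for every s ∈ S; (2) S² = R. -/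
private def TT (R : Type*) [Ring R] [StarRing R] : AddSubgroup R :=
  AddSubgroup.closure {z : R | ∃ a ∈ {r : R | star r = r},
          ∃ b ∈ {r : R | star r = r}, z = a * b}

section basic

variable {R : Type*} [Ring R] [StarRing R]

private lemma mem_gen {a b : R} (ha : star a = a) (hb : star b = b) :
    a * b ∈ TT R :=
  AddSubgroup.subset_closure ⟨a, ha, b, hb, rfl⟩

private lemma sym_mem {s : R} (hs : star s = s) : s ∈ TT R := by
  simpa using mem_gen hs (star_one R)

private lemma star_memTT {t : R} (ht : t ∈ TT R) : star t ∈ TT R := by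
  refine AddSubgroup.closure_induction ?_ ?_ ?_ ?_ ht
  · rintro z ⟨a, ha, b, hb, rfl⟩
    rw [star_mul, ha, hb]
    exact mem_gen hb ha
  · simpa using (TT R).zero_mem
  · intro a b _ _ hA hB
    rw [star_add]; exact add_mem hA hB
  · intro a _ hA
    rw [star_neg]; exact neg_mem hA

end basic

section main

variable {F R : Type*} [Field F] [Ring R] [Algebra F R] [StarRing R]

/-- `½ ∈ R`. -/
private def hf (F : Type*) (R : Type*) [Field F] [Ring R] [Algebra F R] : R :=
  algebraMap F R 2⁻¹

private lemma hf_comm (r : R) : hf F R * r = r * hf F R :=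
  (Algebra.commutes _ _)

private lemma hf_star (hfirst : Set.center R ⊆ {r : R | star r = r}) :
    star (hf F R) = hf F R :=
  hfirst (Semigroup.mem_center_iff.mpr fun r => (hf_comm r).symm)

private lemma hf_two (hchar : (2 : F) ≠ 0) (z : R) : hf F R * (z + z) = z := by
  have h2 : ((2 : F) : F) ≠ 0 := hchar
  have : hf F R * (2 : R) = 1 := by
    have h2R : ((algebraMap F R) 2) = (2 : R) := map_ofNat _ 2
    rw [hf, ← h2R, ← map_mul, inv_mul_cancel₀ hchar, map_one]
  calc hf F R * (z + z) = hf F R * (2 * z) := by rw [two_mul]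
    _ = (hf F R * 2) * z := by rw [mul_assoc]
    _ = z := by rw [this, one_mul]

/-- `T` is closed under multiplication by the central element `½`. -/
private lemma hf_mul_mem (hfirst : Set.center R ⊆ {r : R | star r = r})
    {t : R} (ht : t ∈ TT R) : hf F R * t ∈ TT R := by
  refine AddSubgroup.closure_induction ?_ ?_ ?_ ?_ ht
  · rintro z ⟨a, ha, b, hb, rfl⟩
    rw [← mul_assoc]
    refine mem_gen ?_ hb
    rw [star_mul, ha, hf_star hfirst, ← hf_comm]
  · simpa using (TT R).zero_mem
  · intro a b _ _ hA hB
    rw [mul_add]; exact add_mem hA hB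
  · intro a _ hA
    rw [mul_neg]; exact neg_mem hA

/-- decomposition into symmetric and skew parts -/
private lemma decompose (hchar : (2 : F) ≠ 0)
    (hfirst : Set.center R ⊆ {r : R | star r = r}) (r : R) :
    ∃ σ κ : R, star σ = σ ∧ star κ = -κ ∧ r = σ + κ := by
  refine ⟨hf F R * (r + star r), hf F R * (r - star r), ?_, ?_, ?_⟩
  · rw [star_mul, hf_star hfirst, star_add, star_star, ← hf_comm, add_comm]
  · rw [star_mul, hf_star hfirst, star_sub, star_star, ← hf_comm, ← mul_neg,
      neg_sub]
  · rw [← mul_add]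
    have : r + star r + (r - star r) = r + r := by abel
    rw [this, hf_two hchar]

/-- `T = S²` is a Lie ideal of `R`. -/
private lemma lie_mem (hchar : (2 : F) ≠ 0)
    (hfirst : Set.center R ⊆ {r : R | star r = r})
    {t : R} (ht : t ∈ TT R) (r : R) : t * r - r * t ∈ TT R := by
  refine AddSubgroup.closure_induction ?_ ?_ ?_ ?_ ht
  · rintro z ⟨a, ha, b, hb, rfl⟩
    obtain ⟨σ, κ, hσ, hκ, rfl⟩ := decompose hchar hfirst r
    have hsym : a * b * σ - σ * (a * b) ∈ TT R := by
      have e : a * b * σ - σ * (a * b)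
          = a * (b * σ + σ * b) - (a * σ + σ * a) * b := by noncomm_ring
      rw [e]
      refine sub_mem (mem_gen ha ?_) (mem_gen ?_ hb)
      · rw [star_add, star_mul, star_mul, hσ, hb, add_comm]
      · rw [star_add, star_mul, star_mul, hσ, ha, add_comm]
    have hskew : a * b * κ - κ * (a * b) ∈ TT R := by
      have e : a * b * κ - κ * (a * b)
          = a * (b * κ - κ * b) + (a * κ - κ * a) * b := by noncomm_ring
      rw [e]
      refine add_mem (mem_gen ha ?_) (mem_gen ?_ hb)
      · rw [star_sub, star_mul, star_mul, hκ, hb, mul_neg, neg_mul, sub_neg_eq_add,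
          ← sub_eq_neg_add]
      · rw [star_sub, star_mul, star_mul, hκ, ha, mul_neg, neg_mul, sub_neg_eq_add,
          ← sub_eq_neg_add]
    have e : a * b * (σ + κ) - (σ + κ) * (a * b)
        = (a * b * σ - σ * (a * b)) + (a * b * κ - κ * (a * b)) := by noncomm_ring
    rw [e]; exact add_mem hsym hskew
  · simpa using (TT R).zero_mem
  · intro u v _ _ hU hV
    have e : (u + v) * r - r * (u + v) = (u * r - r * u) + (v * r - r * v) := by
      noncomm_ring
    rw [e]; exact add_mem hU hV
  · intro u _ hU
    have e : (-u) * r - r * (-u) = -(u * r - r * u) := by noncomm_ring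
    rw [e]; exact neg_mem hU

end main

/-- First criterion: there exist `x, y ∈ S` with `xy − yx ≠ 0` and `xSy ⊆ S²`
iff `S² = R`. -/
theorem stmt_10 (F R : Type*) [Field F] [Ring R] [Algebra F R] [StarRing R]
    [IsSimpleRing R]
    (hchar : (2 : F) ≠ 0)
    (hfirst : Set.center R ⊆ {r : R | star r = r})
    (hproper : {r : R | star r = r} ≠ Set.univ)
    (hnc : ∃ a ∈ {r : R | star r = r}, ∃ b ∈ {r : R | star r = r}, a * b ≠ b * a) :
    (∃ x ∈ {r : R | star r = r}, ∃ y ∈ {r : R | star r = r},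
      x * y - y * x ≠ 0 ∧
      ∀ s ∈ {r : R | star r = r}, x * s * y ∈
        AddSubgroup.closure {z : R | ∃ a ∈ {r : R | star r = r},
          ∃ b ∈ {r : R | star r = r}, z = a * b}) ↔
    (AddSubgroup.closure {z : R | ∃ a ∈ {r : R | star r = r},
        ∃ b ∈ {r : R | star r = r}, z = a * b} : Set R) = Set.univ := by
  constructor
  · rintro ⟨x, hx, y, hy, hc0, hxy⟩
    have hx' : star x = x := hx
    have hy' : star y = y := hy
    -- `c = xy - yx` is a nonzero element of `T`
    have hxyT : x * y ∈ TT R := mem_gen hx hy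
    have hyxT : y * x ∈ TT R := mem_gen hy hx
    have hcT : x * y - y * x ∈ TT R := sub_mem hxyT hyxT
    have hcstar : star (x * y - y * x) = -(x * y - y * x) := by
      rw [star_sub, star_mul, star_mul, hx', hy', neg_sub]
    -- key step : c * s ∈ T for every symmetric s
    have cS : ∀ s : R, star s = s → (x * y - y * x) * s ∈ TT R := by
      intro s hs
      have h1 : x * (y * s + s * y) ∈ TT R := by
        refine mem_gen hx ?_
        rw [star_add, star_mul, star_mul, hs, hy', add_comm]
      have h2 : y * (x * s + s * x) ∈ TT R := by
        refine mem_gen hy ?_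
        rw [star_add, star_mul, star_mul, hs, hx', add_comm]
      have hxsy : x * s * y ∈ TT R := hxy s hs
      have hysx : y * s * x ∈ TT R := by
        have := star_memTT hxsy
        rwa [star_mul, star_mul, hx', hy', hs, ← mul_assoc] at this
      have hxys : x * y * s ∈ TT R := by
        have e : x * y * s = x * (y * s + s * y) - x * s * y := by noncomm_ring
        rw [e]; exact sub_mem h1 hxsy
      have hyxs : y * x * s ∈ TT R := by
        have e : y * x * s = y * (x * s + s * x) - y * s * x := by noncomm_ring
        rw [e]; exact sub_mem h2 hysx
      have e : (x * y - y * x) * s = x * y * s - y * x * s := by noncomm_ring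
      rw [e]; exact sub_mem hxys hyxs
    have Sc : ∀ s : R, star s = s → s * (x * y - y * x) ∈ TT R := by
      intro s hs
      have e : s * (x * y - y * x) = (x * y - y * x) * s
          - ((x * y - y * x) * s - s * (x * y - y * x)) := by noncomm_ring
      rw [e]
      exact sub_mem (cS s hs) (lie_mem hchar hfirst hcT s)
    -- c * κ ∈ T for every skew κ
    have cK : ∀ κ : R, star κ = -κ → (x * y - y * x) * κ ∈ TT R := by
      intro κ hκ
      set c := x * y - y * x with hc
      have h1 : c * κ + κ * c ∈ TT R := by
        refine sym_mem ?_
        rw [star_add, star_mul, star_mul, hκ, hcstar, neg_mul_neg, neg_mul_neg,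
          add_comm]
      have h2 : c * κ - κ * c ∈ TT R := lie_mem hchar hfirst hcT κ
      have e : (c * κ + κ * c) + (c * κ - κ * c) = c * κ + c * κ := by abel
      have := hf_mul_mem (F := F) hfirst (add_mem h1 h2)
      rwa [e, hf_two hchar] at this
    have Kc : ∀ κ : R, star κ = -κ → κ * (x * y - y * x) ∈ TT R := by
      intro κ hκ
      set c := x * y - y * x with hc
      have h1 : c * κ + κ * c ∈ TT R := by
        refine sym_mem ?_
        rw [star_add, star_mul, star_mul, hκ, hcstar, neg_mul_neg, neg_mul_neg,
          add_comm]
      have e : κ * c = (c * κ + κ * c) - c * κ := by abel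
      rw [e]; exact sub_mem h1 (cK κ hκ)
    -- c * r ∈ T and r * c ∈ T for every r
    have cR : ∀ r : R, (x * y - y * x) * r ∈ TT R := by
      intro r
      obtain ⟨σ, κ, hσ, hκ, rfl⟩ := decompose hchar hfirst r
      rw [mul_add]; exact add_mem (cS σ hσ) (cK κ hκ)
    have Rc : ∀ r : R, r * (x * y - y * x) ∈ TT R := by
      intro r
      obtain ⟨σ, κ, hσ, hκ, rfl⟩ := decompose hchar hfirst r
      rw [add_mul]; exact add_mem (Sc σ hσ) (Kc κ hκ)
    -- the two-sided ideal of "absorbing" elements of T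
    let I : TwoSidedIdeal R := TwoSidedIdeal.mk'
      {r : R | r ∈ TT R ∧ (∀ w, r * w ∈ TT R) ∧ (∀ w, w * r ∈ TT R)}
      ⟨(TT R).zero_mem, fun w => by simpa using (TT R).zero_mem,
        fun w => by simpa using (TT R).zero_mem⟩
      (fun {u v} hu hv => ⟨add_mem hu.1 hv.1,
        fun w => by rw [add_mul]; exact add_mem (hu.2.1 w) (hv.2.1 w),
        fun w => by rw [mul_add]; exact add_mem (hu.2.2 w) (hv.2.2 w)⟩)
      (fun {u} hu => ⟨neg_mem hu.1,
        fun w => by rw [neg_mul]; exact neg_mem (hu.2.1 w),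
        fun w => by rw [mul_neg]; exact neg_mem (hu.2.2 w)⟩)
      (fun {u v} hv => by
        refine ⟨?_, fun w => ?_, fun w => ?_⟩
        · have e : u * v = v * u - (v * u - u * v) := by noncomm_ring
          rw [e]; exact sub_mem (hv.2.1 u) (lie_mem hchar hfirst hv.1 u)
        · have e : u * v * w = (v * w) * u - ((v * w) * u - u * (v * w)) := by
            noncomm_ring
          rw [e]
          have h1 : (v * w) * u ∈ TT R := by
            have e2 : v * w * u = v * (w * u) := by rw [mul_assoc]
            rw [e2]; exact hv.2.1 (w * u)
          exact sub_mem h1 (lie_mem hchar hfirst (hv.2.1 w) u)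
        · have e : w * (u * v) = (w * u) * v := by rw [mul_assoc]
          rw [e]; exact hv.2.2 (w * u))
      (fun {u v} hu => by
        refine ⟨hu.2.1 v, fun w => ?_, fun w => ?_⟩
        · have e : u * v * w = u * (v * w) := by rw [mul_assoc]
          rw [e]; exact hu.2.1 (v * w)
        · have e : w * (u * v) = (w * u) * v := by rw [mul_assoc]
          have h1 : v * (w * u) ∈ TT R := by
            have e2 : v * (w * u) = (v * w) * u := by rw [mul_assoc]
            rw [e2]; exact hu.2.2 (v * w)
          have e3 : (w * u) * v = v * (w * u) + ((w * u) * v - v * (w * u)) := by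
            noncomm_ring
          rw [e, e3]
          exact add_mem h1 (lie_mem hchar hfirst (hu.2.2 w) v))
    have hcI : (x * y - y * x) ∈ I := by
      rw [TwoSidedIdeal.mem_mk']
      exact ⟨hcT, cR, Rc⟩
    have h1I : (1 : R) ∈ I := IsSimpleRing.one_mem_of_ne_zero_mem I hc0 hcI
    have h1T : (∀ w : R, w ∈ TT R) := by
      rw [TwoSidedIdeal.mem_mk'] at h1I
      intro w
      have := h1I.2.1 w
      rwa [one_mul] at this
    exact Set.eq_univ_of_forall h1T
  · intro hT
    obtain ⟨a, ha, b, hb, hab⟩ := hnc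
    refine ⟨a, ha, b, hb, sub_ne_zero.mpr hab, fun s _ => ?_⟩
    have : (a * s * b : R) ∈ (TT R : Set R) := by
      rw [show (TT R : Set R) = Set.univ from hT]
      trivial
    exact this
end

section
/- Let F be a field of characteristic ≠ 2 and R a simple associative unital F-algebra with an involution * of the first kind, and assume S ⊊ R. If K is not a skew-commutative set (i.e., there exist x, y ∈ K with xy ≠ −yx), then R = K + KSK, where K + KSK is the additive subgroup of R generated by K together with all products akb with a, b ∈ K and k ∈ S. -/
/-!
`K + KSK` is a Jordan ideal of `R`: it is closed under `r ∘ t = r t + t r`, as one sees by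
splitting `r` into its symmetric and skew parts (`2` is invertible). By a Herstein-type
computation, a Jordan ideal `J` of a simple ring with `J ≠ 0` contains every `⁅⁅c, w⁆, r⁆`, hence
every `x ⁅⁅a, b⁆, z⁆ y`; so `J = R` unless all double commutators vanish, which in a simple ring
forces commutativity. Here `x y + y x ≠ 0` lies in `K + KSK`, and `R` is not commutative since the
involution fixes the centre pointwise while `S ≠ R`.
-/

section JordanIdeal

variable {R : Type*} [Ring R]

def AddSubgroup.IsJordanIdeal (J : AddSubgroup R) : Prop :=
  ∀ (r : R) {j : R}, j ∈ J → r * j + j * r ∈ J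

theorem AddSubgroup.mem_of_add_self_mem [Invertible (2 : R)] {J : AddSubgroup R}
    (hJ : ∀ x ∈ J, ⅟2 * x ∈ J) {x : R} (hx : x + x ∈ J) : x ∈ J := by
  simpa only [← two_mul, invOf_mul_cancel_left] using hJ _ hx

theorem IsSimpleRing.eq_top_of_mul_mul_mem [IsSimpleRing R] {J : AddSubgroup R} {v : R}
    (hv : v ≠ 0) (h : ∀ x y, x * v * y ∈ J) : J = ⊤ := by
  have hone : 1 ∈ TwoSidedIdeal.span {v} :=
    IsSimpleRing.one_mem_of_ne_zero_mem _ hv (TwoSidedIdeal.subset_span rfl)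
  refine (AddSubgroup.eq_top_iff' J).2 fun z => ?_
  have hz : z ∈ TwoSidedIdeal.span {v} := by
    simpa using TwoSidedIdeal.mul_mem_left _ z 1 hone
  rw [TwoSidedIdeal.mem_span_iff_mem_addSubgroup_closure] at hz
  refine (AddSubgroup.closure_le J).2 ?_ hz
  rintro _ ⟨_, ⟨x, -, _, rfl, rfl⟩, y, -, rfl⟩
  exact h x y

theorem IsSimpleRing.center_eq_univ_of_lie_lie_eq_zero [IsSimpleRing R]
    (h : ∀ a b c : R, ⁅⁅a, b⁆, c⁆ = 0) : Set.center R = Set.univ := by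
  have hc : ∀ a b : R, ⁅a, b⁆ ∈ Subring.center R := fun a b =>
    Subring.mem_center_iff.2 fun c => by
      simpa [Ring.lie_def, sub_eq_zero, eq_comm] using h a b c
  refine Set.eq_univ_of_forall fun x => Semigroup.mem_center_iff.2 fun y => ?_
  by_contra hxy
  have hd : (⟨⁅x, y⁆, hc x y⟩ : Subring.center R) ≠ 0 := fun h0 =>
    hxy (by simpa [Ring.lie_def, sub_eq_zero, eq_comm] using congrArg Subtype.val h0)
  obtain ⟨u, hu⟩ := (IsSimpleRing.isField_center R).mul_inv_cancel hd
  -- `⁅x, x * y⁆ = x * ⁅x, y⁆` is central as well, so `x` is central.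
  have hx : x = ⁅x, x * y⁆ * u := by
    have hdu : ⁅x, y⁆ * (u : R) = 1 := congrArg Subtype.val hu
    rw [show ⁅x, x * y⁆ = x * ⁅x, y⁆ by simp only [Ring.lie_def]; noncomm_ring, mul_assoc, hdu,
      mul_one]
  have hxc : x ∈ Subring.center R := hx ▸ mul_mem (hc x (x * y)) u.2
  exact hxy (Subring.mem_center_iff.1 hxc y)

namespace AddSubgroup.IsJordanIdeal

variable [Invertible (2 : R)] {J : AddSubgroup R} {j : R}

theorem invOf_two_mul_mem (hJ : J.IsJordanIdeal) (hj : j ∈ J) : ⅟2 * j ∈ J := by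
  have hc : Commute (⅟2 : R) j := (Commute.ofNat_left 2 j).invOf_left
  convert hJ (⅟2 * ⅟2) hj using 1
  rw [← (hc.mul_left hc).eq, ← add_mul, ← mul_add, invOf_two_add_invOf_two, mul_one]

theorem mem_of_add_self_mem (hJ : J.IsJordanIdeal) {x : R} (hx : x + x ∈ J) : x ∈ J :=
  AddSubgroup.mem_of_add_self_mem (fun _ => hJ.invOf_two_mul_mem) hx

theorem mul_mul_add_mul_mul_mem (hJ : J.IsJordanIdeal) (hj : j ∈ J) (x y : R) :
    x * j * y + y * j * x ∈ J := by
  refine hJ.mem_of_add_self_mem ?_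
  convert sub_mem (sub_mem (add_mem (hJ y (hJ x hj)) (hJ x (hJ y hj))) (hJ (x * y) hj))
    (hJ (y * x) hj) using 1
  noncomm_ring

theorem mul_mul_lie_add_lie_mul_mul_mem (hJ : J.IsJordanIdeal) (hj : j ∈ J) (x y c : R) :
    y * j * ⁅x, c⁆ + ⁅c, y⁆ * j * x ∈ J := by
  convert sub_mem (sub_mem (hJ c (hJ.mul_mul_add_mul_mul_mem hj x y))
    (hJ.mul_mul_add_mul_mul_mem hj (c * x) y)) (hJ.mul_mul_add_mul_mul_mem hj x (y * c)) using 1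
  simp only [Ring.lie_def]
  noncomm_ring

theorem lie_lie_mul_mul_mem (hJ : J.IsJordanIdeal) (hj : j ∈ J) (c w x y : R) :
    ⁅⁅c, w⁆, y * j * x⁆ ∈ J := by
  convert add_mem (sub_mem (hJ.mul_mul_lie_add_lie_mul_mul_mem hj x (w * y) c)
    (hJ w (hJ.mul_mul_lie_add_lie_mul_mul_mem hj x y c)))
    (hJ.mul_mul_lie_add_lie_mul_mul_mem hj (x * w) y c) using 1
  simp only [Ring.lie_def]
  noncomm_ring

variable [IsSimpleRing R]

theorem lie_lie_mem (hJ : J.IsJordanIdeal) (hj : j ∈ J) (hj0 : j ≠ 0) (c w r : R) :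
    ⁅⁅c, w⁆, r⁆ ∈ J := by
  have htop : J.comap (AddMonoidHom.mulLeft ⁅c, w⁆ - AddMonoidHom.mulRight ⁅c, w⁆) = ⊤ :=
    IsSimpleRing.eq_top_of_mul_mul_mem hj0 fun y x => hJ.lie_lie_mul_mul_mem hj c w x y
  have hr : r ∈ J.comap (AddMonoidHom.mulLeft ⁅c, w⁆ - AddMonoidHom.mulRight ⁅c, w⁆) :=
    htop ▸ AddSubgroup.mem_top r
  exact hr

theorem lie_lie_mul_mem (hJ : J.IsJordanIdeal) (hj : j ∈ J) (hj0 : j ≠ 0) (a b z x : R) :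
    ⁅⁅a, b⁆, z⁆ * x ∈ J := by
  refine hJ.mem_of_add_self_mem ?_
  convert add_mem (hJ x (hJ.lie_lie_mem hj hj0 a b z)) (hJ.lie_lie_mem hj hj0 ⁅a, b⁆ z x) using 1
  simp only [Ring.lie_def]
  noncomm_ring

theorem mul_lie_lie_mul_mem (hJ : J.IsJordanIdeal) (hj : j ∈ J) (hj0 : j ≠ 0) (a b z x y : R) :
    x * ⁅⁅a, b⁆, z⁆ * y ∈ J := by
  convert sub_mem (hJ x (hJ.lie_lie_mul_mem hj hj0 a b z y))
    (hJ.lie_lie_mul_mem hj hj0 a b z (y * x)) using 1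
  noncomm_ring

theorem eq_top (hJ : J.IsJordanIdeal) (hj : j ∈ J) (hj0 : j ≠ 0)
    (hR : Set.center R ≠ Set.univ) : J = ⊤ := by
  obtain ⟨a, b, z, hv⟩ : ∃ a b z : R, ⁅⁅a, b⁆, z⁆ ≠ 0 := by
    by_contra! h
    exact hR (IsSimpleRing.center_eq_univ_of_lie_lie_eq_zero h)
  exact IsSimpleRing.eq_top_of_mul_mul_mem hv (hJ.mul_lie_lie_mul_mem hj hj0 a b z)

end AddSubgroup.IsJordanIdeal

end JordanIdeal

section SkewAddSkewSymSkew

variable (R : Type*) [Ring R] [StarRing R]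

/-- `K + KSK`, where `K` and `S` are the skew and the symmetric elements. -/
def skewAddSkewSymSkew : AddSubgroup R :=
  AddSubgroup.closure ({r : R | star r = -r} ∪
    {z : R | ∃ a ∈ {r : R | star r = -r}, ∃ s ∈ {r : R | star r = r},
      ∃ b ∈ {r : R | star r = -r}, z = a * s * b})

namespace skewAddSkewSymSkew

variable {R} {a b c k s t : R}

theorem skew_mem (hk : star k = -k) : k ∈ skewAddSkewSymSkew R :=
  AddSubgroup.subset_closure (Or.inl hk)

theorem skew_mul_sym_mul_skew_mem (ha : star a = -a) (hs : star s = s) (hb : star b = -b) :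
    a * s * b ∈ skewAddSkewSymSkew R :=
  AddSubgroup.subset_closure (Or.inr ⟨a, ha, s, hs, b, hb, rfl⟩)

theorem skew_mul_skew_mem (ha : star a = -a) (hb : star b = -b) :
    a * b ∈ skewAddSkewSymSkew R := by
  simpa using skew_mul_sym_mul_skew_mem ha (star_one R) hb

theorem invOf_two_mul_mem [Invertible (2 : R)] (ht : t ∈ skewAddSkewSymSkew R) :
    ⅟2 * t ∈ skewAddSkewSymSkew R := by
  have hhalf : star (⅟2 : R) = ⅟2 := by
    have h := congrArg star (mul_invOf_self (2 : R))
    rw [star_mul, star_ofNat, star_one] at h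
    exact (invOf_eq_left_inv h).symm
  have hskew {k : R} (hk : star k = -k) : star (⅟2 * k) = -(⅟2 * k) := by
    rw [star_mul, hhalf, hk, neg_mul, ((Commute.ofNat_left 2 k).invOf_left).eq]
  refine (AddSubgroup.closure_le
    ((skewAddSkewSymSkew R).comap (AddMonoidHom.mulLeft ⅟2))).2 ?_ ht
  rintro _ (hk | ⟨a, ha, s, hs, b, hb, rfl⟩)
  · exact skew_mem (hskew hk)
  · show ⅟2 * (a * s * b) ∈ skewAddSkewSymSkew R
    simpa only [mul_assoc] using skew_mul_sym_mul_skew_mem (hskew ha) hs hb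

theorem mem_of_add_self_mem [Invertible (2 : R)] (ht : t + t ∈ skewAddSkewSymSkew R) :
    t ∈ skewAddSkewSymSkew R :=
  AddSubgroup.mem_of_add_self_mem (fun _ => invOf_two_mul_mem) ht

theorem skew_mul_skew_mul_skew_mem [Invertible (2 : R)] (ha : star a = -a) (hb : star b = -b)
    (hc : star c = -c) : a * b * c ∈ skewAddSkewSymSkew R := by
  have hlie {x y : R} (hx : star x = -x) (hy : star y = -y) : star ⁅x, y⁆ = -⁅x, y⁆ := by
    simp only [Ring.lie_def, star_sub, star_mul, hx, hy]
    noncomm_ring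
  -- `4 abc = 2 ⁅a, b⁆ c + (a ∘ b) ∘ c + ⁅a ∘ b, c⁆` and `⁅a ∘ b, c⁆ = ⁅a, c⁆ ∘ b + a ∘ ⁅b, c⁆`
  have hsum := add_mem (add_mem (skew_mul_skew_mem (hlie ha hb) hc)
    (skew_mul_skew_mem (hlie ha hb) hc)) (skew_mem (k := (a * b + b * a) * c + c * (a * b + b * a))
      (by simp only [star_add, star_mul, ha, hb, hc]; noncomm_ring))
  have hlie' := add_mem (add_mem (skew_mul_skew_mem (hlie ha hc) hb)
    (skew_mul_skew_mem hb (hlie ha hc))) (add_mem (skew_mul_skew_mem ha (hlie hb hc))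
      (skew_mul_skew_mem (hlie hb hc) ha))
  refine mem_of_add_self_mem (mem_of_add_self_mem ?_)
  convert add_mem hsum hlie' using 1
  simp only [Ring.lie_def]
  noncomm_ring

theorem sym_mul_add_mul_sym_mem (hs : star s = s) (ht : t ∈ skewAddSkewSymSkew R) :
    s * t + t * s ∈ skewAddSkewSymSkew R := by
  refine (AddSubgroup.closure_le ((skewAddSkewSymSkew R).comap
    (AddMonoidHom.mulLeft s + AddMonoidHom.mulRight s))).2 ?_ ht
  rintro x ((hx : star x = -x) | ⟨a, (ha : star a = -a), s', (hs' : star s' = s'), b,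
    (hb : star b = -b), rfl⟩)
  · show s * x + x * s ∈ skewAddSkewSymSkew R
    exact skew_mem (by simp only [star_add, star_mul, hs, hx]; noncomm_ring)
  · show s * (a * s' * b) + a * s' * b * s ∈ skewAddSkewSymSkew R
    have h := sub_mem (add_mem
      (skew_mul_sym_mul_skew_mem (a := s * a + a * s)
        (by simp only [star_add, star_mul, hs, ha]; noncomm_ring) hs' hb)
      (skew_mul_sym_mul_skew_mem ha hs' (b := s * b + b * s)
        (by simp only [star_add, star_mul, hs, hb]; noncomm_ring)))
      (skew_mul_sym_mul_skew_mem ha (s := s * s' + s' * s)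
        (by simp only [star_add, star_mul, hs, hs']; abel) hb)
    convert h using 1
    noncomm_ring

theorem skew_mul_add_mul_skew_mem [Invertible (2 : R)] (hk : star k = -k)
    (ht : t ∈ skewAddSkewSymSkew R) : k * t + t * k ∈ skewAddSkewSymSkew R := by
  have hlie {x : R} (hx : star x = -x) : star ⁅k, x⁆ = -⁅k, x⁆ := by
    simp only [Ring.lie_def, star_sub, star_mul, hk, hx]
    noncomm_ring
  refine (AddSubgroup.closure_le ((skewAddSkewSymSkew R).comap
    (AddMonoidHom.mulLeft k + AddMonoidHom.mulRight k))).2 ?_ ht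
  rintro x ((hx : star x = -x) | ⟨a, (ha : star a = -a), s, (hs : star s = s), b,
    (hb : star b = -b), rfl⟩)
  · exact add_mem (skew_mul_skew_mem hk hx) (skew_mul_skew_mem hx hk)
  · show k * (a * s * b) + a * s * b * k ∈ skewAddSkewSymSkew R
    have h := sub_mem (add_mem (skew_mul_sym_mul_skew_mem (hlie ha) hs hb)
      (skew_mul_skew_mul_skew_mem ha (b := k * s + s * k)
        (by simp only [star_add, star_mul, hk, hs]; noncomm_ring) hb))
      (skew_mul_sym_mul_skew_mem ha hs (hlie hb))
    convert h using 1
    simp only [Ring.lie_def]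
    noncomm_ring

theorem isJordanIdeal [Invertible (2 : R)] : (skewAddSkewSymSkew R).IsJordanIdeal := by
  intro r t ht
  refine mem_of_add_self_mem ?_
  convert add_mem (sym_mul_add_mul_sym_mem (s := r + star r) (by simp [add_comm]) ht)
    (skew_mul_add_mul_skew_mem (k := r - star r) (by simp) ht) using 1
  noncomm_ring

end skewAddSkewSymSkew

end SkewAddSkewSymSkew

/-- If `R` is simple and `K` is not a skew-commutative set, then `R = K + KSK`. -/
theorem stmt_14 (F R : Type*) [Field F] [Ring R] [Algebra F R] [StarRing R]
    [IsSimpleRing R]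
    (hchar : (2 : F) ≠ 0)
    (hfirst : Set.center R ⊆ {r : R | star r = r})
    (hproper : {r : R | star r = r} ≠ Set.univ)
    (hnsc : ∃ x ∈ {r : R | star r = -r}, ∃ y ∈ {r : R | star r = -r},
      x * y ≠ -(y * x)) :
    (AddSubgroup.closure ({r : R | star r = -r} ∪
        {z : R | ∃ a ∈ {r : R | star r = -r}, ∃ s ∈ {r : R | star r = r},
          ∃ b ∈ {r : R | star r = -r}, z = a * s * b}) : Set R) = Set.univ := by
  obtain ⟨x, hx, y, hy, hxy⟩ := hnsc
  have h2 := (IsUnit.mk0 _ hchar).map (algebraMap F R)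
  rw [map_ofNat] at h2
  let _ := h2.invertible
  have hR : Set.center R ≠ Set.univ := fun h => hproper (Set.univ_subset_iff.1 (h ▸ hfirst))
  have hj : x * y + y * x ∈ skewAddSkewSymSkew R := add_mem
    (skewAddSkewSymSkew.skew_mul_skew_mem hx hy) (skewAddSkewSymSkew.skew_mul_skew_mem hy hx)
  have hj0 : x * y + y * x ≠ 0 := fun h => hxy (eq_neg_of_add_eq_zero_left h)
  have htop := skewAddSkewSymSkew.isJordanIdeal.eq_top hj hj0 hR
  exact congrArg SetLike.coe htop
end

section
/- Let F be a field of characteristic ≠ 2 and R a simple associative unital F-algebra with an involution * of the first kind, and assume S ⊊ R. If there exist x, y ∈ K such that xy + yx ≠ 0 and xsy ∈ KS + K² for every s ∈ S, then KS + K² = R. -/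
/-- If `R` is simple and there exist `x, y ∈ K` with `xy + yx ≠ 0` and
`xSy ⊆ KS + K²`, then `KS + K² = R`. -/
theorem stmt_15 (F R : Type*) [Field F] [Ring R] [Algebra F R] [StarRing R]
    [IsSimpleRing R]
    (hchar : (2 : F) ≠ 0)
    (hfirst : Set.center R ⊆ {r : R | star r = r})
    (hproper : {r : R | star r = r} ≠ Set.univ)
    (hxy : ∃ x ∈ {r : R | star r = -r}, ∃ y ∈ {r : R | star r = -r},
      x * y + y * x ≠ 0 ∧
      ∀ s ∈ {r : R | star r = r}, x * s * y ∈
        AddSubgroup.closure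
          ({z : R | ∃ a ∈ {r : R | star r = -r}, ∃ b ∈ {r : R | star r = r}, z = a * b} ∪
           {z : R | ∃ a ∈ {r : R | star r = -r}, ∃ b ∈ {r : R | star r = -r}, z = a * b})) :
    (AddSubgroup.closure
        ({z : R | ∃ a ∈ {r : R | star r = -r}, ∃ b ∈ {r : R | star r = r}, z = a * b} ∪
         {z : R | ∃ a ∈ {r : R | star r = -r}, ∃ b ∈ {r : R | star r = -r}, z = a * b}) :
      Set R) = Set.univ := by
  classical
  set G : Set R :=
    ({z : R | ∃ a ∈ {r : R | star r = -r}, ∃ b ∈ {r : R | star r = r}, z = a * b} ∪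
     {z : R | ∃ a ∈ {r : R | star r = -r}, ∃ b ∈ {r : R | star r = -r}, z = a * b}) with hG
  set T : AddSubgroup R := AddSubgroup.closure G with hT
  -- the "half" element
  set u : R := algebraMap F R (2⁻¹ : F) with hu
  have hu_comm : ∀ r : R, u * r = r * u := fun r => Algebra.commutes _ r
  have hu_star : star u = u := by
    apply hfirst
    exact Semigroup.mem_center_iff.mpr fun g => (hu_comm g).symm
  have hu2 : ∀ r : R, u * r + u * r = r := by
    intro r
    have h1 : u + u = 1 := by
      rw [hu, ← map_add, show (2⁻¹ + 2⁻¹ : F) = 1 by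
        rw [← two_mul, mul_inv_cancel₀ hchar], map_one]
    rw [← add_mul, h1, one_mul]
  -- decomposition into symmetric and skew parts
  have decomp : ∀ r : R, ∃ s k : R, star s = s ∧ star k = -k ∧ r = s + k := by
    intro r
    refine ⟨u * (r + star r), u * (r - star r), ?_, ?_, ?_⟩
    · rw [star_mul, star_add, star_star, hu_star, ← hu_comm, add_comm]
    · rw [star_mul, star_sub, star_star, hu_star, ← hu_comm, ← mul_neg, neg_sub]
    · rw [← mul_add, show r + star r + (r - star r) = r + r from by abel, mul_add, hu2]
  -- generators membership
  have genA : ∀ a b : R, star a = -a → star b = b → a * b ∈ T := fun a b ha hb =>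
    AddSubgroup.subset_closure (Or.inl ⟨a, ha, b, hb, rfl⟩)
  have genB : ∀ a b : R, star a = -a → star b = -b → a * b ∈ T := fun a b ha hb =>
    AddSubgroup.subset_closure (Or.inr ⟨a, ha, b, hb, rfl⟩)
  have hskewT : ∀ w : R, star w = -w → w ∈ T := by
    intro w hw
    have := genA w 1 hw (star_one R)
    rwa [mul_one] at this
  -- K * R ⊆ T
  have hKR : ∀ k r : R, star k = -k → k * r ∈ T := by
    intro k r hk
    obtain ⟨s, k', hs, hk', hr⟩ := decomp r
    rw [hr, mul_add]
    exact add_mem (genA k s hk hs) (genB k k' hk hk')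
  -- R * K ⊆ T
  have hRK : ∀ k r : R, star k = -k → r * k ∈ T := by
    intro k r hk
    obtain ⟨s, k', hs, hk', hr⟩ := decomp r
    rw [hr, add_mul]
    refine add_mem ?_ (genB k' k hk' hk)
    have hskew : star (s * k + k * s) = -(s * k + k * s) := by
      rw [star_add, star_mul, star_mul, hs, hk, neg_mul, mul_neg]
      abel
    have : s * k = (s * k + k * s) - k * s := by abel
    rw [this]
    exact sub_mem (hskewT _ hskew) (genA k s hk hs)
  -- T is a right ideal
  have hright : ∀ t ∈ T, ∀ r : R, t * r ∈ T := by
    intro t ht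
    refine AddSubgroup.closure_induction (p := fun t _ => ∀ r : R, t * r ∈ T)
      ?_ ?_ ?_ ?_ ht
    · rintro z (⟨a, ha, b, hb, rfl⟩ | ⟨a, ha, b, hb, rfl⟩) r <;>
        · rw [mul_assoc]
          exact hKR a (b * r) ha
    · intro r; rw [zero_mul]; exact zero_mem T
    · intro x y _ _ hx hy r
      rw [add_mul]
      exact add_mem (hx r) (hy r)
    · intro x _ hx r
      rw [neg_mul]
      exact neg_mem (hx r)
  -- T is a left ideal
  have hleft : ∀ t ∈ T, ∀ r : R, r * t ∈ T := by
    intro t ht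
    refine AddSubgroup.closure_induction (p := fun t _ => ∀ r : R, r * t ∈ T)
      ?_ ?_ ?_ ?_ ht
    · rintro z (⟨a, ha, b, hb, rfl⟩ | ⟨a, ha, b, hb, rfl⟩) r <;>
        · rw [← mul_assoc]
          exact hright (r * a) (hRK a r ha) b
    · intro r; rw [mul_zero]; exact zero_mem T
    · intro x y _ _ hx hy r
      rw [mul_add]
      exact add_mem (hx r) (hy r)
    · intro x _ hx r
      rw [mul_neg]
      exact neg_mem (hx r)
  -- build the two-sided ideal
  let I : TwoSidedIdeal R := TwoSidedIdeal.mk' (T : Set R) (zero_mem T)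
    (fun hx hy => add_mem hx hy) (fun hx => neg_mem hx)
    (fun {x y} hy => hleft y hy x) (fun {x y} hx => hright x hx y)
  have hmemI : ∀ z : R, z ∈ I ↔ z ∈ T := fun z => TwoSidedIdeal.mem_mk' _ _ _ _ _ _ z
  -- I is nonzero
  obtain ⟨x, hx, y, hy, hne, -⟩ := hxy
  have hxyT : x * y + y * x ∈ T := add_mem (genB x y hx hy) (genB y x hy hx)
  have hIne : I ≠ ⊥ := by
    intro hbot
    apply hne
    have : x * y + y * x ∈ (⊥ : TwoSidedIdeal R) := by
      rw [← hbot]; exact (hmemI _).mpr hxyT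
    simpa using this
  have hItop : I = ⊤ := (eq_bot_or_eq_top I).resolve_left hIne
  ext r
  simp only [Set.mem_univ, iff_true]
  have : r ∈ I := by rw [hItop]; trivial
  exact (hmemI r).mp this
end

section
/- Let F be a field of characteristic ≠ 2 and R a simple associative unital F-algebra with an involution * of the first kind, and assume S ⊊ R. If there exist x ∈ K and y ∈ S such that xy − yx ≠ 0 and xsy ∈ KS + K² for every s ∈ S, then KS + K² = R. -/
section Aux

variable {F R : Type*} [Field F] [Ring R] [Algebra F R] [StarRing R] [IsSimpleRing R]

theorem aux_16 (hchar : (2 : F) ≠ 0)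
    (hfirst : Set.center R ⊆ {r : R | star r = r})
    (x y : R) (hx : star x = -x) (hy : star y = y)
    (hc0 : x * y - y * x ≠ 0) (r0 : R) :
    r0 ∈ AddSubgroup.closure
        ({z : R | ∃ a ∈ {r : R | star r = -r}, ∃ b ∈ {r : R | star r = r}, z = a * b} ∪
         {z : R | ∃ a ∈ {r : R | star r = -r}, ∃ b ∈ {r : R | star r = -r}, z = a * b}) := by
  set Ks : Set R := {r : R | star r = -r} with hKs
  set Ss : Set R := {r : R | star r = r} with hSs
  set gens : Set R := ({z : R | ∃ a ∈ Ks, ∃ b ∈ Ss, z = a * b} ∪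
      {z : R | ∃ a ∈ Ks, ∃ b ∈ Ks, z = a * b}) with hgens
  set W : AddSubgroup R := AddSubgroup.closure gens with hWdef
  -- the halving element
  obtain ⟨h, hcomm, hstar, h1⟩ : ∃ h : R, (∀ a : R, h * a = a * h) ∧ star h = h ∧ h + h = 1 := by
    refine ⟨algebraMap F R 2⁻¹, fun a => (Algebra.commutes _ _), ?_, ?_⟩
    · exact hfirst (Semigroup.mem_center_iff.mpr fun a => (Algebra.commutes _ _).symm)
    · rw [← map_add, ← map_one (algebraMap F R)]
      congr 1
      rw [← two_mul]
      exact mul_inv_cancel₀ hchar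
  -- decomposition into symmetric and skew parts
  have hdecomp : ∀ a : R, ∃ p ∈ Ss, ∃ q ∈ Ks, a = p + q := by
    intro a
    refine ⟨h * (a + star a), ?_, h * (a - star a), ?_, ?_⟩
    · show star _ = _
      rw [star_mul, hstar, star_add, star_star, add_comm (star a) a, hcomm]
    · show star _ = _
      rw [star_mul, hstar, star_sub, star_star, hcomm]
      rw [show star a - a = -(a - star a) by abel, neg_mul]
    · rw [← mul_add, show a + star a + (a - star a) = a + a by abel, mul_add,
        ← add_mul, h1, one_mul]
  have memW_KS : ∀ a ∈ Ks, ∀ b ∈ Ss, a * b ∈ W :=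
    fun a ha b hb => AddSubgroup.subset_closure (Or.inl ⟨a, ha, b, hb, rfl⟩)
  have memW_KK : ∀ a ∈ Ks, ∀ b ∈ Ks, a * b ∈ W :=
    fun a ha b hb => AddSubgroup.subset_closure (Or.inr ⟨a, ha, b, hb, rfl⟩)
  -- L0 : K · R ⊆ W
  have L0 : ∀ k ∈ Ks, ∀ a : R, k * a ∈ W := by
    intro k hk a
    obtain ⟨p, hp, q, hq, rfl⟩ := hdecomp a
    rw [mul_add]
    exact add_mem (memW_KS k hk p hp) (memW_KK k hk q hq)
  have memK_W : ∀ k ∈ Ks, k ∈ W := by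
    intro k hk; simpa using L0 k hk 1
  -- W is a right ideal
  have Wmul : ∀ w ∈ W, ∀ b : R, w * b ∈ W := by
    intro w hw b
    have : W ≤ AddSubgroup.comap (AddMonoidHom.mulRight b) W := by
      rw [hWdef]
      refine (AddSubgroup.closure_le _).mpr ?_
      rintro z (⟨a, ha, c, hc, rfl⟩ | ⟨a, ha, c, hc, rfl⟩) <;>
        · show (a * c) * b ∈ W
          rw [mul_assoc]
          exact L0 a ha _
    exact this hw
  -- V = span of S·K·R
  set V : AddSubgroup R :=
    AddSubgroup.closure {z : R | ∃ s ∈ Ss, ∃ k ∈ Ks, ∃ r : R, z = s * k * r} with hVdef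
  -- S · W ⊆ V
  have SV : ∀ p ∈ Ss, ∀ w ∈ W, p * w ∈ V := by
    intro p hp w hw
    have : W ≤ AddSubgroup.comap (AddMonoidHom.mulLeft p) V := by
      rw [hWdef]
      refine (AddSubgroup.closure_le _).mpr ?_
      rintro z (⟨a, ha, c, hc, rfl⟩ | ⟨a, ha, c, hc, rfl⟩) <;>
        · show p * (a * c) ∈ V
          exact AddSubgroup.subset_closure ⟨p, hp, a, ha, c, by rw [mul_assoc]⟩
    exact this hw
  -- V is a right ideal
  have Vmul : ∀ v ∈ V, ∀ b : R, v * b ∈ V := by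
    intro v hv b
    have : V ≤ AddSubgroup.comap (AddMonoidHom.mulRight b) V := by
      rw [hVdef]
      refine (AddSubgroup.closure_le _).mpr ?_
      rintro z ⟨s, hs, k, hk, r, rfl⟩
      show (s * k * r) * b ∈ V
      exact AddSubgroup.subset_closure ⟨s, hs, k, hk, r * b, by rw [mul_assoc, mul_assoc]⟩
    exact this hv
  -- Identity A : a k b + b* k a* is skew
  have idA : ∀ (a b k : R), k ∈ Ks → a * k * b + star b * k * star a ∈ Ks := by
    intro a b k hk
    show star _ = -_
    rw [star_add, star_mul, star_mul, star_mul, star_mul, star_star, star_star, hk]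
    noncomm_ring
  -- L3 : for t,s ∈ S, k ∈ K : t(skr) - (skr)t ∈ W
  have L3 : ∀ t ∈ Ss, ∀ s ∈ Ss, ∀ k ∈ Ks, ∀ r : R,
      t * (s * k * r) - (s * k * r) * t ∈ W := by
    intro t ht s hs k hk r
    have e1 : (t * s) * k * r + star r * k * (s * t) ∈ W := by
      have := idA (t * s) r k hk
      rw [star_mul, ht, hs] at this
      exact memK_W _ this
    have e2 : (star r * k * s + s * k * r) * t ∈ W := by
      have h2 : star r * k * s + s * k * r ∈ Ks := by
        have := idA (star r) s k hk
        rwa [star_star, hs] at this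
      exact L0 _ h2 t
    have key : t * (s * k * r) - (s * k * r) * t =
        ((t * s) * k * r + star r * k * (s * t)) - (star r * k * s + s * k * r) * t := by
      noncomm_ring
    rw [key]
    exact sub_mem e1 e2
  -- the commutator c
  set c : R := x * y - y * x with hcdef
  have hcS : c ∈ Ss := by
    show star (x * y - y * x) = x * y - y * x
    rw [star_sub, star_mul, star_mul, hx, hy]
    noncomm_ring
  have hqK : h * (x * y + y * x) ∈ Ks := by
    show star (h * (x * y + y * x)) = -(h * (x * y + y * x))
    rw [star_mul, hstar, star_add, star_mul, star_mul, hx, hy, hcomm]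
    rw [show y * -x + -x * y = -(x * y + y * x) by noncomm_ring, neg_mul]
  have hpq : h * c + h * (x * y + y * x) = x * y := by
    rw [← mul_add, hcdef,
      show x * y - y * x + (x * y + y * x) = x * y + x * y by abel,
      mul_add, ← add_mul, h1, one_mul]
  have hp2 : h * c + h * c = c := by
    rw [← add_mul, h1, one_mul]
  -- L5 : V · c ⊆ W
  have L5 : ∀ v ∈ V, v * c ∈ W := by
    intro v hv
    have : V ≤ AddSubgroup.comap (AddMonoidHom.mulRight c) W := by
      rw [hVdef]
      refine (AddSubgroup.closure_le _).mpr ?_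
      rintro z ⟨s, hs, k, hk, r, rfl⟩
      show (s * k * r) * c ∈ W
      have h3 : c * (s * k * r) - (s * k * r) * c ∈ W := L3 c hcS s hs k hk r
      have hxyv : (x * y) * (s * k * r) ∈ W := by
        rw [mul_assoc]
        exact L0 x hx _
      have hqv : (h * (x * y + y * x)) * (s * k * r) ∈ W := L0 _ hqK _
      have hpv : (h * c) * (s * k * r) ∈ W := by
        have hp : h * c = x * y - h * (x * y + y * x) := by
          rw [eq_sub_iff_add_eq]; exact hpq
        have e : (h * c) * (s * k * r) =
            (x * y) * (s * k * r) - (h * (x * y + y * x)) * (s * k * r) := by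
          rw [hp, sub_mul]
        rw [e]
        exact sub_mem hxyv hqv
      have hcv : c * (s * k * r) ∈ W := by
        have e : c * (s * k * r) = (h * c) * (s * k * r) + (h * c) * (s * k * r) := by
          rw [← add_mul, hp2]
        rw [e]
        exact add_mem hpv hpv
      have e : (s * k * r) * c = c * (s * k * r) - (c * (s * k * r) - (s * k * r) * c) := by
        abel
      rw [e]
      exact sub_mem hcv h3
    exact this hv
  -- U = W ⊔ V is a two-sided ideal
  have aW : ∀ (a : R), ∀ w ∈ W, a * w ∈ W ⊔ V := by
    intro a w hw
    obtain ⟨pa, hpa, qa, hqa, rfl⟩ := hdecomp a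
    rw [add_mul]
    exact add_mem (AddSubgroup.mem_sup_right (SV pa hpa w hw))
      (AddSubgroup.mem_sup_left (L0 qa hqa w))
  have aV : ∀ (a : R), ∀ v ∈ V, a * v ∈ W ⊔ V := by
    intro a v hv
    have : V ≤ AddSubgroup.comap (AddMonoidHom.mulLeft a) (W ⊔ V) := by
      rw [hVdef]
      refine (AddSubgroup.closure_le _).mpr ?_
      rintro z ⟨s, hs, k, hk, r, rfl⟩
      show a * (s * k * r) ∈ W ⊔ V
      have e : a * (s * k * r) = (a * s) * (k * r) := by
        simp only [mul_assoc]
      rw [e]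
      exact aW (a * s) (k * r) (L0 k hk r)
    exact this hv
  have Uleft : ∀ (a : R), ∀ u ∈ W ⊔ V, a * u ∈ W ⊔ V := by
    intro a u hu
    obtain ⟨w, hw, v, hv, rfl⟩ := AddSubgroup.mem_sup.mp hu
    rw [mul_add]
    exact add_mem (aW a w hw) (aV a v hv)
  have Uright : ∀ u ∈ W ⊔ V, ∀ b : R, u * b ∈ W ⊔ V := by
    intro u hu b
    obtain ⟨w, hw, v, hv, rfl⟩ := AddSubgroup.mem_sup.mp hu
    rw [add_mul]
    exact add_mem (AddSubgroup.mem_sup_left (Wmul w hw b))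
      (AddSubgroup.mem_sup_right (Vmul v hv b))
  -- first application of simplicity : W ⊔ V = R
  have hx0 : x ≠ 0 := by
    rintro rfl
    apply hc0
    rw [hcdef]
    simp
  have hUall : ∀ a : R, a ∈ W ⊔ V := by
    set I : TwoSidedIdeal R := TwoSidedIdeal.mk' (W ⊔ V : AddSubgroup R)
      (zero_mem _) (fun ha hb => add_mem ha hb) (fun ha => neg_mem ha)
      (fun {a b} hb => Uleft a b hb) (fun {a b} ha => Uright a ha b) with hI
    have hmem : ∀ z : R, z ∈ I ↔ z ∈ W ⊔ V := by
      intro z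
      rw [hI]
      exact TwoSidedIdeal.mem_mk' _ _ _ _ _ _ z
    rcases IsSimpleRing.simple.eq_bot_or_eq_top I with hbot | htop
    · exfalso
      apply hx0
      have : x ∈ I := (hmem x).mpr (AddSubgroup.mem_sup_left (memK_W x hx))
      rw [hbot] at this
      exact (TwoSidedIdeal.mem_bot R).mp this
    · intro a
      exact (hmem a).mp (htop ▸ TwoSidedIdeal.mem_top R)
  -- second application of simplicity : N = {r | R·r ⊆ W} = R
  have hcN : ∀ a : R, a * c ∈ W := by
    intro a
    obtain ⟨w, hw, v, hv, rfl⟩ := AddSubgroup.mem_sup.mp (hUall a)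
    rw [add_mul]
    exact add_mem (Wmul w hw c) (L5 v hv)
  set N : Set R := {r : R | ∀ a : R, a * r ∈ W} with hN
  have Nzero : (0 : R) ∈ N := fun a => by rw [mul_zero]; exact zero_mem W
  have Nadd : ∀ {z w : R}, z ∈ N → w ∈ N → z + w ∈ N := by
    intro z w hz hw a
    rw [mul_add]
    exact add_mem (hz a) (hw a)
  have Nneg : ∀ {z : R}, z ∈ N → -z ∈ N := by
    intro z hz a
    rw [mul_neg]
    exact neg_mem (hz a)
  have Nleft : ∀ {z w : R}, w ∈ N → z * w ∈ N := by
    intro z w hw a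
    rw [← mul_assoc]
    exact hw (a * z)
  have Nright : ∀ {z w : R}, z ∈ N → z * w ∈ N := by
    intro z w hz a
    rw [← mul_assoc]
    exact Wmul _ (hz a) w
  set J : TwoSidedIdeal R := TwoSidedIdeal.mk' N Nzero Nadd Nneg Nleft Nright with hJ
  have hmemJ : ∀ z : R, z ∈ J ↔ z ∈ N := by
    intro z
    rw [hJ]
    exact TwoSidedIdeal.mem_mk' _ _ _ _ _ _ z
  rcases IsSimpleRing.simple.eq_bot_or_eq_top J with hbot | htop
  · exfalso
    apply hc0
    have : c ∈ J := (hmemJ c).mpr hcN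
    rw [hbot] at this
    exact (TwoSidedIdeal.mem_bot R).mp this
  · have : r0 ∈ N := (hmemJ r0).mp (htop ▸ TwoSidedIdeal.mem_top R)
    simpa using this 1

end Aux

/-- If `R` is simple and there exist `x ∈ K`, `y ∈ S` with `xy − yx ≠ 0` and
`xSy ⊆ KS + K²`, then `KS + K² = R`. -/
theorem stmt_16 (F R : Type*) [Field F] [Ring R] [Algebra F R] [StarRing R]
    [IsSimpleRing R]
    (hchar : (2 : F) ≠ 0)
    (hfirst : Set.center R ⊆ {r : R | star r = r})
    (hproper : {r : R | star r = r} ≠ Set.univ)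
    (hxy : ∃ x ∈ {r : R | star r = -r}, ∃ y ∈ {r : R | star r = r},
      x * y - y * x ≠ 0 ∧
      ∀ s ∈ {r : R | star r = r}, x * s * y ∈
        AddSubgroup.closure
          ({z : R | ∃ a ∈ {r : R | star r = -r}, ∃ b ∈ {r : R | star r = r}, z = a * b} ∪
           {z : R | ∃ a ∈ {r : R | star r = -r}, ∃ b ∈ {r : R | star r = -r}, z = a * b})) :
    (AddSubgroup.closure
        ({z : R | ∃ a ∈ {r : R | star r = -r}, ∃ b ∈ {r : R | star r = r}, z = a * b} ∪
         {z : R | ∃ a ∈ {r : R | star r = -r}, ∃ b ∈ {r : R | star r = -r}, z = a * b}) :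
      Set R) = Set.univ := by
  obtain ⟨x, hx, y, hy, hc0, -⟩ := hxy
  rw [Set.eq_univ_iff_forall]
  intro r0
  exact aux_16 hchar hfirst x y hx hy hc0 r0
end

section
/- Let F be a field of characteristic ≠ 2 and R an associative unital F-algebra (not necessarily simple) with an involution * of the first kind, and assume S ⊊ R. Assume K is not a skew-commutative set, and that there exist x, y ∈ K such that xy + yx is right invertible (there is z ∈ R with (xy + yx)z = 1) and xsy ∈ K² for every s ∈ S. Then K + K² = R. -/
/-!
Let `K = skewAdjoint R`, `K² = skewSquare R` and `u = xy + yx`. For symmetric `σ`,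
`uσ = x(yσ + σy) - xσy + y(xσ + σx) - yσx`, where both anticommutators are skew and
`yσx = (xσy)*`, so `uσ ∈ K²`. For skew `κ`, `uκ + κu` is skew while
`uκ - κu = x[y,κ] + [x,κ]y + y[x,κ] + [y,κ]x` lies in `K²`, so `2uκ ∈ K + K²`. Splitting `2w`
into its symmetric and skew parts gives `4uw ∈ K + K²` for every `w`; as `u` is right invertible
and `2` is a unit, this is all of `R`.
-/

open AddSubgroup (closure subset_closure closure_induction mem_sup_left mem_sup_right)

section

variable {R : Type*} [Ring R] [StarRing R]

variable (R) in
def skewSquare : AddSubgroup R :=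
  closure {z | ∃ a ∈ skewAdjoint R, ∃ b ∈ skewAdjoint R, z = a * b}

section skewAdjoint

variable {a b : R}

lemma isSelfAdjoint_mul_add_mul_of_mem_skewAdjoint (ha : a ∈ skewAdjoint R)
    (hb : b ∈ skewAdjoint R) : IsSelfAdjoint (a * b + b * a) := by
  rw [skewAdjoint.mem_iff] at ha hb
  rw [IsSelfAdjoint, star_add, star_mul, star_mul, ha, hb]
  noncomm_ring

lemma mul_add_mul_mem_skewAdjoint (ha : IsSelfAdjoint a) (hb : b ∈ skewAdjoint R) :
    a * b + b * a ∈ skewAdjoint R := by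
  rw [skewAdjoint.mem_iff] at hb ⊢
  rw [star_add, star_mul, star_mul, ha.star_eq, hb]
  noncomm_ring

lemma mul_sub_mul_mem_skewAdjoint (ha : a ∈ skewAdjoint R) (hb : b ∈ skewAdjoint R) :
    a * b - b * a ∈ skewAdjoint R := by
  rw [skewAdjoint.mem_iff] at ha hb ⊢
  rw [star_sub, star_mul, star_mul, ha, hb]
  noncomm_ring

lemma mul_mem_skewSquare (ha : a ∈ skewAdjoint R) (hb : b ∈ skewAdjoint R) :
    a * b ∈ skewSquare R :=
  subset_closure ⟨a, ha, b, hb, rfl⟩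

lemma star_mem_skewSquare {w : R} (hw : w ∈ skewSquare R) : star w ∈ skewSquare R := by
  induction hw using closure_induction with
  | mem _ h =>
    obtain ⟨a, ha, b, hb, rfl⟩ := h
    have hab : star (a * b) = b * a := by
      rw [star_mul, skewAdjoint.mem_iff.mp ha, skewAdjoint.mem_iff.mp hb, neg_mul_neg]
    exact hab ▸ mul_mem_skewSquare hb ha
  | zero => simp
  | add _ _ _ _ h₁ h₂ => simpa using add_mem h₁ h₂
  | neg _ _ h => simpa using neg_mem h

end skewAdjoint

section anticommutator

variable {x y : R}

lemma anticommutator_mul_mem_skewSquare (hx : x ∈ skewAdjoint R) (hy : y ∈ skewAdjoint R)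
    (hxSy : ∀ s ∈ selfAdjoint R, x * s * y ∈ skewSquare R) {σ : R} (hσ : IsSelfAdjoint σ) :
    (x * y + y * x) * σ ∈ skewSquare R := by
  have hyσx : y * σ * x ∈ skewSquare R := by
    have h : star (x * σ * y) = y * σ * x := by
      rw [star_mul, star_mul, hσ.star_eq, skewAdjoint.mem_iff.mp hx, skewAdjoint.mem_iff.mp hy]
      noncomm_ring
    exact h ▸ star_mem_skewSquare (hxSy σ hσ)
  have hxyσ := mul_mem_skewSquare hx (add_comm (σ * y) _ ▸ mul_add_mul_mem_skewAdjoint hσ hy)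
  have hyxσ := mul_mem_skewSquare hy (add_comm (σ * x) _ ▸ mul_add_mul_mem_skewAdjoint hσ hx)
  have h : (x * y + y * x) * σ
      = (x * (y * σ + σ * y) - x * σ * y) + (y * (x * σ + σ * x) - y * σ * x) := by
    noncomm_ring
  rw [h]
  exact add_mem (sub_mem hxyσ (hxSy σ hσ)) (sub_mem hyxσ hyσx)

lemma two_mul_anticommutator_mul_mem_sup (hx : x ∈ skewAdjoint R) (hy : y ∈ skewAdjoint R)
    {κ : R} (hκ : κ ∈ skewAdjoint R) :
    2 * ((x * y + y * x) * κ) ∈ skewAdjoint R ⊔ skewSquare R := by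
  have hsum : (x * y + y * x) * κ + κ * (x * y + y * x) ∈ skewAdjoint R :=
    mul_add_mul_mem_skewAdjoint (isSelfAdjoint_mul_add_mul_of_mem_skewAdjoint hx hy) hκ
  have hyκ := mul_sub_mul_mem_skewAdjoint hy hκ
  have hxκ := mul_sub_mul_mem_skewAdjoint hx hκ
  have hdiff : x * (y * κ - κ * y) + (x * κ - κ * x) * y
      + y * (x * κ - κ * x) + (y * κ - κ * y) * x ∈ skewSquare R :=
    add_mem (add_mem (add_mem (mul_mem_skewSquare hx hyκ) (mul_mem_skewSquare hxκ hy))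
      (mul_mem_skewSquare hy hxκ)) (mul_mem_skewSquare hyκ hx)
  have h : 2 * ((x * y + y * x) * κ) = ((x * y + y * x) * κ + κ * (x * y + y * x))
      + (x * (y * κ - κ * y) + (x * κ - κ * x) * y
        + y * (x * κ - κ * x) + (y * κ - κ * y) * x) := by
    noncomm_ring
  rw [h]
  exact add_mem (mem_sup_left hsum) (mem_sup_right hdiff)

lemma four_mul_anticommutator_mul_mem_sup (hx : x ∈ skewAdjoint R) (hy : y ∈ skewAdjoint R)
    (hxSy : ∀ s ∈ selfAdjoint R, x * s * y ∈ skewSquare R) (w : R) :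
    4 * ((x * y + y * x) * w) ∈ skewAdjoint R ⊔ skewSquare R := by
  have hσ : (x * y + y * x) * (w + star w) ∈ skewSquare R :=
    anticommutator_mul_mem_skewSquare hx hy hxSy (IsSelfAdjoint.add_star_self w)
  have hκ : w - star w ∈ skewAdjoint R := by
    rw [skewAdjoint.mem_iff, star_sub, star_star, neg_sub]
  have h : 4 * ((x * y + y * x) * w) = 2 * ((x * y + y * x) * (w + star w))
      + 2 * ((x * y + y * x) * (w - star w)) := by
    noncomm_ring
  rw [h]
  exact add_mem (mem_sup_right (two_mul ((x * y + y * x) * (w + star w)) ▸ add_mem hσ hσ))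
    (two_mul_anticommutator_mul_mem_sup hx hy hκ)

theorem skewAdjoint_sup_skewSquare_eq_top (h2 : IsUnit (2 : R)) (hx : x ∈ skewAdjoint R)
    (hy : y ∈ skewAdjoint R) (hxSy : ∀ s ∈ selfAdjoint R, x * s * y ∈ skewSquare R) {z : R}
    (hz : (x * y + y * x) * z = 1) : skewAdjoint R ⊔ skewSquare R = ⊤ := by
  obtain ⟨c, hc⟩ := h2.exists_right_inv
  refine eq_top_iff.mpr fun r _ => ?_
  have h4c : (4 : R) * (c * c) = 1 := by
    rw [show (4 : R) = 2 * 2 by norm_num, mul_assoc, ← mul_assoc 2 c c, hc, one_mul, hc]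
  have hr : 4 * ((x * y + y * x) * (z * (c * c * r))) = r := by
    rw [← mul_assoc (x * y + y * x) z, hz, one_mul, ← mul_assoc, h4c, one_mul]
  exact hr ▸ four_mul_anticommutator_mul_mem_sup hx hy hxSy _

end anticommutator

end

theorem stmt_17_general (F R : Type*) [Field F] [Ring R] [Algebra F R] [StarRing R]
    (hchar : (2 : F) ≠ 0)
    (hxy : ∃ x ∈ {r : R | star r = -r}, ∃ y ∈ {r : R | star r = -r},
      (∃ z : R, (x * y + y * x) * z = 1) ∧
      ∀ s ∈ {r : R | star r = r}, x * s * y ∈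
        AddSubgroup.closure {z : R | ∃ a ∈ {r : R | star r = -r},
          ∃ b ∈ {r : R | star r = -r}, z = a * b}) :
    (AddSubgroup.closure ({r : R | star r = -r} ∪
        {z : R | ∃ a ∈ {r : R | star r = -r}, ∃ b ∈ {r : R | star r = -r}, z = a * b}) :
      Set R) = Set.univ := by
  obtain ⟨x, hx, y, hy, ⟨z, hz⟩, hxSy⟩ := hxy
  have h2 : IsUnit (2 : R) := by
    rw [← map_ofNat (algebraMap F R) 2]
    exact (IsUnit.mk0 _ hchar).map _
  have hK : AddSubgroup.closure {r : R | star r = -r} = skewAdjoint R :=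
    AddSubgroup.closure_eq (skewAdjoint R)
  rw [AddSubgroup.closure_union, hK]
  exact congrArg SetLike.coe (skewAdjoint_sup_skewSquare_eq_top h2 hx hy hxSy hz)

/-- If `K` is not skew-commutative and there exist `x, y ∈ K` with `xy + yx` right
invertible and `xSy ⊆ K²`, then `K + K² = R` (no simplicity assumed). -/
theorem stmt_17 (F R : Type*) [Field F] [Ring R] [Algebra F R] [StarRing R]
    (hchar : (2 : F) ≠ 0)
    (hfirst : Set.center R ⊆ {r : R | star r = r})
    (hproper : {r : R | star r = r} ≠ Set.univ)
    (hnsc : ∃ x ∈ {r : R | star r = -r}, ∃ y ∈ {r : R | star r = -r},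
      x * y ≠ -(y * x))
    (hxy : ∃ x ∈ {r : R | star r = -r}, ∃ y ∈ {r : R | star r = -r},
      (∃ z : R, (x * y + y * x) * z = 1) ∧
      ∀ s ∈ {r : R | star r = r}, x * s * y ∈
        AddSubgroup.closure {z : R | ∃ a ∈ {r : R | star r = -r},
          ∃ b ∈ {r : R | star r = -r}, z = a * b}) :
    (AddSubgroup.closure ({r : R | star r = -r} ∪
        {z : R | ∃ a ∈ {r : R | star r = -r}, ∃ b ∈ {r : R | star r = -r}, z = a * b}) :
      Set R) = Set.univ :=
  stmt_17_general F R hchar hxy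
end

section
/- Let F be a field of characteristic ≠ 2 and R a simple associative unital F-algebra with an involution * of the first kind, and assume S ⊊ R. If there exist x ∈ S and y ∈ K such that xy − yx ≠ 0, then S²K = R, where S²K is the additive subgroup of R generated by all products abc with a, b ∈ S and c ∈ K. -/
/-- If `R` is simple and there exist `x ∈ S`, `y ∈ K` with `xy − yx ≠ 0`,
then `S²K = R`. -/
theorem stmt_19 (F R : Type*) [Field F] [Ring R] [Algebra F R] [StarRing R]
    [IsSimpleRing R]
    (hchar : (2 : F) ≠ 0)
    (hfirst : Set.center R ⊆ {r : R | star r = r})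
    (hproper : {r : R | star r = r} ≠ Set.univ)
    (hxy : ∃ x ∈ {r : R | star r = r}, ∃ y ∈ {r : R | star r = -r},
      x * y - y * x ≠ 0) :
    (AddSubgroup.closure {z : R | ∃ a ∈ {r : R | star r = r},
        ∃ b ∈ {r : R | star r = r}, ∃ c ∈ {r : R | star r = -r},
        z = a * b * c} : Set R) = Set.univ := by
  obtain ⟨x, hx, y, hy, hxyne⟩ := hxy
  simp only [Set.mem_setOf_eq] at hx hy
  set T : AddSubgroup R := AddSubgroup.closure {z : R | ∃ a ∈ {r : R | star r = r},
        ∃ b ∈ {r : R | star r = r}, ∃ c ∈ {r : R | star r = -r},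
        z = a * b * c} with hTdef
  -- basic memberships
  have h1S : star (1 : R) = 1 := star_one R
  have memT : ∀ a b c : R, star a = a → star b = b → star c = -c → a * b * c ∈ T := by
    intro a b c ha hb hc
    exact AddSubgroup.subset_closure ⟨a, ha, b, hb, c, hc, rfl⟩
  have memK : ∀ c : R, star c = -c → c ∈ T := by
    intro c hc
    have := memT 1 1 c h1S h1S hc
    simpa using this
  have memSK : ∀ s k : R, star s = s → star k = -k → s * k ∈ T := by
    intro s k hs hk
    have := memT 1 s k h1S hs hk
    simpa using this
  have memKS : ∀ s k : R, star s = s → star k = -k → k * s ∈ T := by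
    intro s k hs hk
    have h1 : star (s * k + k * s) = -(s * k + k * s) := by
      rw [star_add, star_mul, star_mul, hs, hk]; noncomm_ring
    have h2 := memK _ h1
    have h3 := memSK s k hs hk
    have he : k * s = (s * k + k * s) - s * k := by noncomm_ring
    rw [he]
    exact sub_mem h2 h3
  -- centrality of scalars
  have hstar_alg : ∀ c : F, star (algebraMap F R c) = algebraMap F R c := by
    intro c
    exact hfirst (Semigroup.mem_center_iff.mpr fun g => (Algebra.commutes c g).symm)
  have h2comm : ∀ g : R, g * algebraMap F R (2⁻¹ : F) = algebraMap F R (2⁻¹ : F) * g :=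
    fun g => (Algebra.commutes _ g).symm
  have h2two : algebraMap F R (2⁻¹ : F) * 2 = 1 := by
    have h2R : (2 : R) = algebraMap F R (2 : F) := (map_ofNat (algebraMap F R) 2).symm
    rw [h2R, ← map_mul, inv_mul_cancel₀ hchar, map_one]
  -- decomposition R = S + K
  have decomp : ∀ r : R, ∃ s k : R, star s = s ∧ star k = -k ∧ r = s + k := by
    intro r
    refine ⟨algebraMap F R (2⁻¹ : F) * (r + star r), algebraMap F R (2⁻¹ : F) * (r - star r),
      ?_, ?_, ?_⟩
    · rw [star_mul, hstar_alg, star_add, star_star, h2comm, add_comm]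
    · rw [star_mul, hstar_alg, star_sub, star_star, h2comm]
      rw [show star r - r = -(r - star r) by abel, mul_neg]
    · have he : algebraMap F R (2⁻¹ : F) * (r + star r) + algebraMap F R (2⁻¹ : F) * (r - star r)
          = (algebraMap F R (2⁻¹ : F) * 2) * r := by noncomm_ring
      rw [he, h2two, one_mul]
  -- all commutators are in T
  have commT : ∀ a b : R, a * b - b * a ∈ T := by
    intro a b
    obtain ⟨s, k, hs, hk, rfl⟩ := decomp a
    obtain ⟨s', k', hs', hk', rfl⟩ := decomp b
    have e1 : s * s' - s' * s ∈ T := by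
      refine memK _ ?_
      rw [star_sub, star_mul, star_mul, hs, hs']; abel
    have e2 : s * k' - k' * s ∈ T := sub_mem (memSK s k' hs hk') (memKS s k' hs hk')
    have e3 : k * s' - s' * k ∈ T := sub_mem (memKS s' k hs' hk) (memSK s' k hs' hk)
    have e4 : k * k' - k' * k ∈ T := by
      refine memK _ ?_
      rw [star_sub, star_mul, star_mul, hk, hk']; noncomm_ring
    have he : (s + k) * (s' + k') - (s' + k') * (s + k)
        = (s * s' - s' * s) + (s * k' - k' * s) + (k * s' - s' * k) + (k * k' - k' * k) := by
      noncomm_ring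
    rw [he]
    exact add_mem (add_mem (add_mem e1 e2) e3) e4
  -- products S·K·S and K·S·S are in T
  have memSKS : ∀ a k b : R, star a = a → star k = -k → star b = b → a * k * b ∈ T := by
    intro a k b ha hk hb
    have h1 := commT (a * k) b
    have h2 := memT b a k hb ha hk
    have he : a * k * b = (a * k * b - b * (a * k)) + b * a * k := by noncomm_ring
    rw [he]
    exact add_mem h1 h2
  have memKSS : ∀ k a b : R, star k = -k → star a = a → star b = b → k * a * b ∈ T := by
    intro k a b hk ha hb
    have h1 := commT k (a * b)
    have h2 := memT a b k ha hb hk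
    have he : k * a * b = (k * (a * b) - (a * b) * k) + a * b * k := by noncomm_ring
    rw [he]
    exact add_mem h1 h2
  -- the nonzero symmetric element s₁ = xy - yx satisfies s₁·R ⊆ T
  have hs1 : star (x * y - y * x) = x * y - y * x := by
    rw [star_sub, star_mul, star_mul, hx, hy]; noncomm_ring
  have hs1R : ∀ t : R, (x * y - y * x) * t ∈ T := by
    intro t
    obtain ⟨s, k, hs, hk, rfl⟩ := decomp t
    have hA : (x * y - y * x) * s ∈ T := by
      have h1 : x * y * s ∈ T := memSKS x y s hx hy hs
      have h2 : y * x * s ∈ T := memKSS y x s hy hx hs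
      have he : (x * y - y * x) * s = x * y * s - y * x * s := by noncomm_ring
      rw [he]; exact sub_mem h1 h2
    have hB : (x * y - y * x) * k ∈ T := memSK _ _ hs1 hk
    rw [mul_add]
    exact add_mem hA hB
  -- the two-sided ideal J = {r | r·R ⊆ T}
  set J : TwoSidedIdeal R := TwoSidedIdeal.mk' {r : R | ∀ t : R, r * t ∈ T}
    (by intro t; rw [zero_mul]; exact zero_mem T)
    (by intro a b ha hb t; rw [add_mul]; exact add_mem (ha t) (hb t))
    (by intro a ha t; rw [neg_mul]; exact neg_mem (ha t))
    (by
      intro a b hb t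
      have h1 := commT a (b * t)
      have h2 := hb (t * a)
      have he : a * b * t = (a * (b * t) - (b * t) * a) + b * (t * a) := by noncomm_ring
      rw [he]
      exact add_mem h1 h2)
    (by
      intro a b ha t
      have := ha (b * t)
      rw [← mul_assoc] at this
      exact this) with hJdef
  have hmemJ : ∀ r : R, r ∈ J ↔ ∀ t : R, r * t ∈ T := by
    intro r
    rw [hJdef, TwoSidedIdeal.mem_mk']
    exact Iff.rfl
  have hs1J : (x * y - y * x) ∈ J := (hmemJ _).mpr hs1R
  have hJtop : J = ⊤ := by
    rcases eq_bot_or_eq_top J with h | h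
    · exfalso
      rw [h, TwoSidedIdeal.mem_bot] at hs1J
      exact hxyne hs1J
    · exact h
  have h1J : (1 : R) ∈ J := by rw [hJtop]; exact TwoSidedIdeal.mem_top _
  have hall : ∀ t : R, t ∈ T := by
    intro t
    have := (hmemJ 1).mp h1J t
    rwa [one_mul] at this
  exact Set.eq_univ_of_forall hall
end
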